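/- arXiv:2404.08688 — 4 statements merged into one kernel-verified Lean document; each statement's English description precedes it below -/
import Mathlib

section
/- Let E be a finite-dimensional real vector space with dual E*, and Λ ∈ ⋀^r E with r ≥ 3. For c₁,...,c_k ∈ E*, let Λ_{c₁,...,c_k} ∈ ⋀^{r−k} E denote the contraction (b_{k+1},...,b_r) ↦ Λ(c₁,...,c_k,b_{k+1},...,b_r). If Λ_{c₁,...,c_{r−2},a} ∧ Λ_b + Λ_{c₁,...,c_{r−2},b} ∧ Λ_a = 0 for all a, b, c₁,...,c_{r−2} ∈ E*, then Λ is decomposable, i.e. Λ = v₁ ∧ ⋯ ∧ v_r for some v₁,...,v_r ∈ E. -/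
open Module
namespace Stmt5Aux
variable {V : Type*} [AddCommGroup V] [Module ℝ V]

lemma cons_comp_cycleRange {α : Type*} {M : ℕ} (f : Fin (M+1) → α) (k : Fin (M+1)) :
    Fin.cons (f k) (f ∘ k.succAbove) = f ∘ ⇑(k.cycleRange)⁻¹ := by
  funext j
  induction j using Fin.cases with
  | zero => simp [Equiv.Perm.inv_def, Fin.cycleRange_symm_zero]
  | succ j => simp [Equiv.Perm.inv_def, Fin.cycleRange_symm_succ]

lemma snoc_eq_cons_comp_rotate {α : Type*} {M : ℕ} (g : Fin M → α) (v : α) :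
    (Fin.snoc g v : Fin (M+1) → α) = Fin.cons v g ∘ ⇑(finRotate (M+1)) := by
  funext j
  induction j using Fin.lastCases with
  | last => simp [finRotate_last]
  | cast j => simp [finRotate_succ_apply]

lemma cons_snoc_comm {α : Type*} {M : ℕ} (q : α) (x : Fin M → α) (v : α) :
    (Fin.cons q (Fin.snoc x v) : Fin (M+2) → α) = Fin.snoc (Fin.cons q x) v := by
  funext j
  induction j using Fin.cases with
  | zero =>
      have : (0 : Fin (M+2)) = Fin.castSucc 0 := rfl
      rw [this, Fin.snoc_castSucc]
      simp
  | succ j =>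
      induction j using Fin.lastCases with
      | last =>
          rw [Fin.succ_last, ← Fin.succ_last, Fin.cons_succ, Fin.snoc_last, Fin.succ_last,
            Fin.snoc_last]
      | cast j =>
          have h1 : Fin.succ (Fin.castSucc j) = Fin.castSucc (Fin.succ j) := rfl
          rw [Fin.cons_succ, h1, Fin.snoc_castSucc, Fin.snoc_castSucc, Fin.cons_succ]

lemma cons_comp_succAbove_zero {α : Type*} {M : ℕ} (q : α) (g : Fin (M+1) → α) :
    (Fin.cons q g : Fin (M+2) → α) ∘ (0 : Fin (M+2)).succAbove = g := by
  funext j; simp [Fin.succAbove_zero]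

lemma cons_comp_succAbove_succ {α : Type*} {M : ℕ} (q : α) (g : Fin (M+1) → α) (k : Fin (M+1)) :
    (Fin.cons q g : Fin (M+2) → α) ∘ (Fin.succ k).succAbove = Fin.cons q (g ∘ k.succAbove) := by
  funext j
  induction j using Fin.cases with
  | zero => simp [Fin.succ_succAbove_zero]
  | succ j => simp [Fin.succ_succAbove_succ]

lemma snoc_comp_succAbove_last {α : Type*} {M : ℕ} (g : Fin (M+1) → α) (v : α) :
    (Fin.snoc g v : Fin (M+2) → α) ∘ (Fin.last (M+1)).succAbove = g := by
  funext j; simp [Fin.succAbove_last]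

lemma snoc_comp_succAbove_castSucc {α : Type*} {M : ℕ} (g : Fin (M+1) → α) (v : α)
    (k : Fin (M+1)) :
    (Fin.snoc g v : Fin (M+2) → α) ∘ (Fin.castSucc k).succAbove
      = Fin.snoc (g ∘ k.succAbove) v := by
  funext j
  induction j using Fin.lastCases with
  | last =>
      have h1 : (Fin.castSucc k).succAbove (Fin.last M) = Fin.last (M+1) := by
        rw [Fin.succAbove_castSucc_of_le _ _ (Fin.le_last _), Fin.succ_last]
      rw [Function.comp_apply, h1, Fin.snoc_last, Fin.snoc_last]
  | cast j =>
      rw [Function.comp_apply, Fin.castSucc_succAbove_castSucc, Fin.snoc_castSucc,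
        Fin.snoc_castSucc, Function.comp_apply]

lemma update_comp_succAbove {α : Type*} {M : ℕ} (f : Fin (M+1) → α) (t : Fin (M+1)) (v : α) :
    (Function.update f t v) ∘ t.succAbove = f ∘ t.succAbove := by
  funext j
  simp [Function.update_apply, Fin.succAbove_ne]

lemma snoc_snoc_comp_succAbove {α : Type*} {M : ℕ} (x : Fin M → α) (q v : α) :
    (Fin.snoc (Fin.snoc x q) v : Fin (M+2) → α) ∘ (Fin.castSucc (Fin.last M)).succAbove
      = Fin.snoc x v := by
  rw [snoc_comp_succAbove_castSucc]
  have h1 : (Fin.snoc x q : Fin (M+1) → α) ∘ (Fin.last M).succAbove = x := by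
    funext j; rw [Function.comp_apply, Fin.succAbove_last_apply, Fin.snoc_castSucc]
  rw [h1]

lemma snoc_snoc_at_penult {α : Type*} {M : ℕ} (x : Fin M → α) (q v : α) :
    (Fin.snoc (Fin.snoc x q) v : Fin (M+2) → α) (Fin.castSucc (Fin.last M)) = q := by
  rw [Fin.snoc_castSucc, Fin.snoc_last]

/-! ### Alternating map sign helpers -/

lemma sign_smul_real {ι : Type*} [DecidableEq ι] [Fintype ι] (σ : Equiv.Perm ι) (x : ℝ) :
    (Equiv.Perm.sign σ) • x = ((Equiv.Perm.sign σ : ℤ) : ℝ) * x := by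
  simp [Units.smul_def, zsmul_eq_mul]

lemma alt_cons {M : ℕ} (Λ : V [⋀^Fin (M+1)]→ₗ[ℝ] ℝ) (f : Fin (M+1) → V) (k : Fin (M+1)) :
    Λ (Fin.cons (f k) (f ∘ k.succAbove)) = (-1 : ℝ)^(k : ℕ) * Λ f := by
  rw [cons_comp_cycleRange, AlternatingMap.map_perm, sign_smul_real]
  congr 1
  rw [map_inv, Fin.sign_cycleRange]
  simp

lemma alt_snoc_rot {M : ℕ} (Λ : V [⋀^Fin (M+1)]→ₗ[ℝ] ℝ) (g : Fin M → V) (v : V) :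
    Λ (Fin.snoc g v) = (-1 : ℝ)^M * Λ (Fin.cons v g) := by
  rw [snoc_eq_cons_comp_rotate, AlternatingMap.map_perm, sign_smul_real]
  congr 1
  rw [sign_finRotate]
  push_cast
  ring

lemma alt_snoc_update {M : ℕ} (Λ : V [⋀^Fin (M+1)]→ₗ[ℝ] ℝ) (f : Fin (M+1) → V)
    (t : Fin (M+1)) (v : V) :
    Λ (Fin.snoc (f ∘ t.succAbove) v) = (-1 : ℝ)^(M + (t:ℕ)) * Λ (Function.update f t v) := by
  rw [alt_snoc_rot]
  have h1 : (Fin.cons v (f ∘ t.succAbove) : Fin (M+1) → V)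
      = Fin.cons ((Function.update f t v) t) ((Function.update f t v) ∘ t.succAbove) := by
    rw [update_comp_succAbove, Function.update_self]
  rw [h1, alt_cons, pow_add]
  ring

lemma alt_comp_injective {q : ℕ} (Λ : V [⋀^Fin q]→ₗ[ℝ] ℝ) (c : Fin q → V)
    (f : Fin q → Fin q) (hf : Function.Injective f) :
    ∃ ε : ℝ, (ε = 1 ∨ ε = -1) ∧ Λ (c ∘ f) = ε * Λ c := by
  have hbij : Function.Bijective f := (Finite.injective_iff_bijective).mp hf
  let σ : Equiv.Perm (Fin q) := Equiv.ofBijective f hbij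
  have hcf : c ∘ f = c ∘ ⇑σ := rfl
  refine ⟨((Equiv.Perm.sign σ : ℤ) : ℝ), ?_, ?_⟩
  · rcases Int.units_eq_one_or (Equiv.Perm.sign σ) with hs | hs <;> rw [hs] <;> simp
  · rw [hcf, AlternatingMap.map_perm, sign_smul_real]

/-! ### delta lemma -/

lemma delta_lemma {s : ℕ} (μ : V [⋀^Fin (s+1)]→ₗ[ℝ] ℝ) (c : Fin (s+1) → V) (hc : μ c = 1)
    (j m : Fin (s+1)) :
    μ (Function.update c j (c m)) = if m = j then 1 else 0 := by
  rcases eq_or_ne m j with rfl | hne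
  · simp [hc]
  · rw [if_neg hne]
    refine AlternatingMap.map_eq_zero_of_eq _ _ (i := m) (j := j) ?_ hne
    rw [Function.update_self, Function.update_of_ne hne]

/-! ### Exchange relation from the Pluecker relation -/

lemma exch {s : ℕ} (μ : V [⋀^Fin (s+1)]→ₗ[ℝ] ℝ) (c : Fin (s+1) → V) (hc : μ c = 1)
    (G0 : ∀ (x : Fin s → V) (y : Fin (s+2) → V),
      ∑ i : Fin (s+2), (-1:ℝ)^(i:ℕ) * (μ (Fin.snoc x (y i)) * μ (y ∘ i.succAbove)) = 0)
    (t : Fin (s+1)) (α : Fin (s+1) → V) :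
    μ α = ∑ k : Fin (s+1), μ (Function.update c k (α t)) * μ (Function.update α t (c k)) := by
  have key := G0 (α ∘ t.succAbove) (Fin.cons (α t) c)
  rw [Fin.sum_univ_succ] at key
  -- the i = 0 term
  have h0 : (-1:ℝ)^((0 : Fin (s+2)):ℕ) *
      (μ (Fin.snoc (α ∘ t.succAbove) ((Fin.cons (α t) c : Fin (s+2) → V) 0)) *
        μ ((Fin.cons (α t) c : Fin (s+2) → V) ∘ (0 : Fin (s+2)).succAbove))
      = (-1:ℝ)^(s + (t:ℕ)) * μ α := by
    rw [cons_comp_succAbove_zero, Fin.cons_zero, hc, alt_snoc_update]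
    simp [Function.update_eq_self]
  -- the i = k+1 terms
  have hsucc : ∀ k : Fin (s+1), (-1:ℝ)^((Fin.succ k : Fin (s+2)):ℕ) *
      (μ (Fin.snoc (α ∘ t.succAbove) ((Fin.cons (α t) c : Fin (s+2) → V) (Fin.succ k))) *
        μ ((Fin.cons (α t) c : Fin (s+2) → V) ∘ (Fin.succ k).succAbove))
      = -((-1:ℝ)^(s + (t:ℕ)) *
          (μ (Function.update c k (α t)) * μ (Function.update α t (c k)))) := by
    intro k
    rw [cons_comp_succAbove_succ, Fin.cons_succ, alt_snoc_update]
    have h2 : (Fin.cons (α t) (c ∘ k.succAbove) : Fin (s+1) → V)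
        = Fin.cons ((Function.update c k (α t)) k)
            ((Function.update c k (α t)) ∘ k.succAbove) := by
      rw [update_comp_succAbove, Function.update_self]
    rw [h2, alt_cons]
    rw [Fin.val_succ, pow_succ]
    ring_nf
    rw [show ((k:ℕ)*2) = 2*(k:ℕ) from by ring, pow_mul]
    norm_num
  rw [h0, Finset.sum_congr rfl (fun k _ => hsucc k), Finset.sum_neg_distrib, ← Finset.mul_sum] at key
  have hP : ((-1:ℝ))^(s+(t:ℕ)) ≠ 0 := pow_ne_zero _ (by norm_num)
  refine mul_left_cancel₀ hP ?_
  linarith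

/-! ### Determinant representation -/

lemma det_exch {s : ℕ} (μ : V [⋀^Fin (s+1)]→ₗ[ℝ] ℝ) (c : Fin (s+1) → V) (hc : μ c = 1)
    (z : Fin (s+1) → V) (t : Fin (s+1)) :
    Matrix.det (Matrix.of fun i j => μ (Function.update c j (z i)))
      = ∑ k : Fin (s+1), μ (Function.update c k (z t)) *
          Matrix.det (Matrix.of fun i j => μ (Function.update c j
            ((Function.update z t (c k)) i))) := by
  set M : Matrix (Fin (s+1)) (Fin (s+1)) ℝ := Matrix.of fun i j => μ (Function.update c j (z i))
    with hM
  have hrow : M t = ∑ k : Fin (s+1), M t k • (Pi.single k 1 : Fin (s+1) → ℝ) := by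
    funext j
    simp only [Finset.sum_apply, Pi.smul_apply, Pi.single_apply, smul_eq_mul, mul_ite, mul_one,
      mul_zero]
    rw [Finset.sum_ite_eq Finset.univ j (fun k => M t k)]
    simp
  have h1 : M.det = ∑ k : Fin (s+1), M t k * (M.updateRow t ((Pi.single k 1 : Fin (s+1) → ℝ))).det := by
    have e1 : M.det
        = (M.updateRow t (∑ k : Fin (s+1), M t k • (Pi.single k 1 : Fin (s+1) → ℝ))).det := by
      rw [← hrow, Matrix.updateRow_eq_self]
    have e2 : (M.updateRow t (∑ k : Fin (s+1), M t k • (Pi.single k 1 : Fin (s+1) → ℝ))).det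
        = ∑ k : Fin (s+1), (M.updateRow t (M t k • (Pi.single k 1 : Fin (s+1) → ℝ))).det :=
      MultilinearMap.map_update_sum Matrix.detRowAlternating.toMultilinearMap Finset.univ t
        (fun k => M t k • (Pi.single k 1 : Fin (s+1) → ℝ)) M
    rw [e1, e2]
    exact Finset.sum_congr rfl fun k _ => Matrix.det_updateRow_smul M t (M t k) _
  rw [h1]
  refine Finset.sum_congr rfl fun k _ => ?_
  congr 1
  congr 1
  ext i j
  rcases eq_or_ne i t with rfl | hit
  · simp only [Matrix.updateRow_self, Matrix.of_apply, Function.update_self]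
    rw [delta_lemma μ c hc j k, Pi.single_apply]
    exact if_congr eq_comm rfl rfl
  · rw [Matrix.updateRow_ne hit]
    simp only [hM, Matrix.of_apply]
    rw [Function.update_of_ne hit]

lemma detRepr {s : ℕ} (μ : V [⋀^Fin (s+1)]→ₗ[ℝ] ℝ) (c : Fin (s+1) → V) (hc : μ c = 1)
    (EXCH : ∀ (t : Fin (s+1)) (α : Fin (s+1) → V),
      μ α = ∑ k : Fin (s+1), μ (Function.update c k (α t)) * μ (Function.update α t (c k)))
    (α : Fin (s+1) → V) :
    μ α = Matrix.det (Matrix.of fun i j => μ (Function.update c j (α i))) := by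
  suffices H : ∀ (K : ℕ) (T : Finset (Fin (s+1))), T.card ≤ K →
      ∀ (z : Fin (s+1) → V) (g : Fin (s+1) → Fin (s+1)),
        Set.InjOn g ((T : Set (Fin (s+1))))ᶜ →
        (∀ i, i ∉ T → z i = c (g i)) →
        μ z = Matrix.det (Matrix.of fun i j => μ (Function.update c j (z i))) by
    refine H (s+1) Finset.univ (by simp) α id ?_ ?_
    · simp
    · intro i hi; exact absurd (Finset.mem_univ i) hi
  intro K
  induction K with
  | zero =>
      intro T hT z g hg hz
      have hTe : T = ∅ := Finset.card_eq_zero.mp (Nat.le_zero.mp hT)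
      subst hTe
      have hginj : Function.Injective g := by
        intro i j hij
        exact hg (by simp) (by simp) hij
      have hbij : Function.Bijective g := (Finite.injective_iff_bijective).mp hginj
      set σ : Equiv.Perm (Fin (s+1)) := Equiv.ofBijective g hbij with hσ
      have hzc : z = c ∘ ⇑σ := by
        funext i
        exact hz i (by simp)
      have hmat : (Matrix.of fun i j => μ (Function.update c j (z i)))
          = Equiv.Perm.permMatrix ℝ σ := by
        ext i j
        rw [Matrix.of_apply, hzc]
        simp only [Function.comp_apply]
        rw [delta_lemma μ c hc j (σ i)]
        simp [Equiv.Perm.permMatrix, PEquiv.toMatrix_apply, Equiv.toPEquiv_apply,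
          Option.mem_some_iff]
      rw [hmat, hzc, AlternatingMap.map_perm, Matrix.det_permutation, sign_smul_real, hc, mul_one]
  | succ K ih =>
      intro T hT z g hg hz
      rcases T.eq_empty_or_nonempty with rfl | ⟨t, ht⟩
      · exact ih ∅ (by simp) z g hg hz
      rw [EXCH t z, det_exch μ c hc z t]
      refine Finset.sum_congr rfl fun k _ => ?_
      congr 1
      by_cases hk : ∃ i, i ∉ T ∧ g i = k
      · obtain ⟨i₀, hi₀T, hgi₀⟩ := hk
        have hit : i₀ ≠ t := fun hh => hi₀T (hh ▸ ht)
        have hval : Function.update z t (c k) t = Function.update z t (c k) i₀ := by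
          rw [Function.update_self, Function.update_of_ne hit, hz i₀ hi₀T, hgi₀]
        rw [AlternatingMap.map_eq_zero_of_eq _ _ hval (Ne.symm hit)]
        symm
        refine Matrix.det_zero_of_row_eq (Ne.symm hit) ?_
        funext j
        simp only [Matrix.of_apply]
        rw [← hval]
      · refine ih (T.erase t) ?_ (Function.update z t (c k)) (Function.update g t k) ?_ ?_
        · have := Finset.card_erase_of_mem ht
          omega
        · intro i hi j hj hij
          simp only [Set.mem_compl_iff, Finset.coe_erase, Set.mem_diff] at hi hj
          rcases eq_or_ne i t with rfl | hit
          · rcases eq_or_ne j i with rfl | hjt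
            · rfl
            · exfalso
              have hjT : j ∉ T := by
                by_contra hjT
                exact hj ⟨hjT, fun hh => hjt (by simpa using hh)⟩
              rw [Function.update_self, Function.update_of_ne hjt] at hij
              exact hk ⟨j, hjT, hij.symm⟩
          · rcases eq_or_ne j t with rfl | hjt
            · exfalso
              have hiT : i ∉ T := by
                by_contra hiT
                exact hi ⟨hiT, fun hh => hit (by simpa using hh)⟩
              rw [Function.update_self, Function.update_of_ne hit] at hij
              exact hk ⟨i, hiT, hij⟩
            · have hiT : i ∉ T := by
                by_contra hiT
                exact hi ⟨hiT, fun hh => hit (by simpa using hh)⟩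
              have hjT : j ∉ T := by
                by_contra hjT
                exact hj ⟨hjT, fun hh => hjt (by simpa using hh)⟩
              rw [Function.update_of_ne hit, Function.update_of_ne hjt] at hij
              exact hg (by simpa using hiT) (by simpa using hjT) hij
        · intro i hi
          rcases eq_or_ne i t with rfl | hit
          · rw [Function.update_self, Function.update_self]
          · have hiT : i ∉ T := by
              intro hiT
              exact hi (Finset.mem_erase.mpr ⟨hit, hiT⟩)
            rw [Function.update_of_ne hit, Function.update_of_ne hit]
            exact hz i hiT

end Stmt5Aux

open Stmt5Aux

/- Proposition 3.21 (finite-dimensional case): an r-vector Λ (r = n+3 ≥ 3) on a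
finite-dimensional real vector space E, viewed as an alternating r-form on the
dual E*, satisfying Λ_{c₁,…,c_{r−2},a} ∧ Λ_b + Λ_{c₁,…,c_{r−2},b} ∧ Λ_a = 0
for all covectors, is decomposable. -/
theorem stmt_5 {E : Type*} [AddCommGroup E] [Module ℝ E] [FiniteDimensional ℝ E]
    (n : ℕ) (Λ : AlternatingMap ℝ (Module.Dual ℝ E) ℝ (Fin (n+3)))
    (h : ∀ (a b : Module.Dual ℝ E) (c : Fin (n+1) → Module.Dual ℝ E)
        (α : Fin (n+3) → Module.Dual ℝ E),
      (∑ i : Fin (n+3), (-1 : ℝ)^(i : ℕ) *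
          (Λ (Fin.snoc (Fin.snoc c a) (α i)) * Λ (Fin.cons b (α ∘ i.succAbove)))) +
        (∑ i : Fin (n+3), (-1 : ℝ)^(i : ℕ) *
          (Λ (Fin.snoc (Fin.snoc c b) (α i)) * Λ (Fin.cons a (α ∘ i.succAbove)))) = 0) :
    ∃ v : Fin (n+3) → E, ∀ α : Fin (n+3) → Module.Dual ℝ E,
      Λ α = Matrix.det (Matrix.of fun i j => α i (v j)) := by
  classical
  by_cases hΛ0 : Λ = 0
  · refine ⟨0, fun α => ?_⟩
    have hz : Matrix.det (Matrix.of fun i j => α i ((0 : Fin (n+3) → E) j)) = 0 :=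
      Matrix.det_eq_zero_of_column_eq_zero 0 fun i => by simp
    rw [hΛ0, hz]
    exact AlternatingMap.zero_apply α
  · have hex : ∃ γ : Fin (n+3) → Module.Dual ℝ E, Λ γ ≠ 0 := by
      by_contra hno
      push_neg at hno
      exact hΛ0 (AlternatingMap.ext fun γ => by rw [hno]; rfl)
    obtain ⟨γ, hγ⟩ := hex
    set astar : Module.Dual ℝ E := γ 0 with hastar
    set μ : AlternatingMap ℝ (Module.Dual ℝ E) ℝ (Fin (n+2)) := Λ.curryLeft astar with hμdef
    have hμapp : ∀ z : Fin (n+2) → Module.Dual ℝ E, μ z = Λ (Fin.cons astar z) := fun _ => rfl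
    have hμγ : μ (Fin.tail γ) = Λ γ := by rw [hμapp, Fin.cons_self_tail]
    set c : Fin (n+2) → Module.Dual ℝ E :=
      Function.update (Fin.tail γ) 0 ((Λ γ)⁻¹ • Fin.tail γ 0) with hcdef
    have hc : μ c = 1 := by
      rw [hcdef, AlternatingMap.map_update_smul, Function.update_eq_self, hμγ, smul_eq_mul]
      exact inv_mul_cancel₀ hγ
    -- Step 1 : Pluecker relations for μ
    have G0 : ∀ (x : Fin (n+1) → Module.Dual ℝ E) (y : Fin (n+3) → Module.Dual ℝ E),
        ∑ i : Fin (n+3), (-1:ℝ)^(i:ℕ) * (μ (Fin.snoc x (y i)) * μ (y ∘ i.succAbove)) = 0 := by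
      intro x y
      have hh := h astar astar x y
      have hS : ∑ i : Fin (n+3), (-1:ℝ)^(i:ℕ) *
          (Λ (Fin.snoc (Fin.snoc x astar) (y i)) * Λ (Fin.cons astar (y ∘ i.succAbove))) = 0 := by
        linarith
      have hterm : ∀ i : Fin (n+3), (-1:ℝ)^(i:ℕ) * (μ (Fin.snoc x (y i)) * μ (y ∘ i.succAbove))
          = (-1:ℝ)^(n+1) * ((-1:ℝ)^(i:ℕ) *
            (Λ (Fin.snoc (Fin.snoc x astar) (y i)) * Λ (Fin.cons astar (y ∘ i.succAbove)))) := by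
        intro i
        have e1 : μ (Fin.snoc x (y i)) = (-1:ℝ)^(n+1) * Λ (Fin.snoc (Fin.snoc x astar) (y i)) := by
          rw [hμapp]
          have e2 : (Fin.cons astar (Fin.snoc x (y i)) : Fin (n+3) → Module.Dual ℝ E)
              = Fin.cons ((Fin.snoc (Fin.snoc x astar) (y i) : Fin (n+3) → Module.Dual ℝ E)
                  (Fin.castSucc (Fin.last (n+1))))
                ((Fin.snoc (Fin.snoc x astar) (y i) : Fin (n+3) → Module.Dual ℝ E)
                  ∘ (Fin.castSucc (Fin.last (n+1))).succAbove) := by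
            rw [snoc_snoc_comp_succAbove, snoc_snoc_at_penult]
          rw [e2, alt_cons]
          norm_num
        rw [e1, hμapp]
        ring
      calc ∑ i : Fin (n+3), (-1:ℝ)^(i:ℕ) * (μ (Fin.snoc x (y i)) * μ (y ∘ i.succAbove))
          = ∑ i : Fin (n+3), (-1:ℝ)^(n+1) * ((-1:ℝ)^(i:ℕ) *
            (Λ (Fin.snoc (Fin.snoc x astar) (y i)) * Λ (Fin.cons astar (y ∘ i.succAbove)))) :=
            Finset.sum_congr rfl fun i _ => hterm i
        _ = (-1:ℝ)^(n+1) * ∑ i : Fin (n+3), (-1:ℝ)^(i:ℕ) *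
            (Λ (Fin.snoc (Fin.snoc x astar) (y i)) * Λ (Fin.cons astar (y ∘ i.succAbove))) := by
            rw [Finset.mul_sum]
        _ = 0 := by rw [hS, mul_zero]
    have EXCH := fun t α => exch μ c hc G0 t α
    have DET : ∀ z : Fin (n+2) → Module.Dual ℝ E,
        μ z = Matrix.det (Matrix.of fun i j => μ (Function.update c j (z i))) :=
      detRepr μ c hc EXCH
    -- the vectors
    set w : Fin (n+2) → E := fun j => (Module.evalEquiv ℝ E).symm
      { toFun := fun ψ => μ (Function.update c j ψ),
        map_add' := fun ψ ζ => AlternatingMap.map_update_add μ c j ψ ζ,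
        map_smul' := fun r ψ => AlternatingMap.map_update_smul μ c j r ψ } with hwdef
    have hw : ∀ (ψ : Module.Dual ℝ E) (j : Fin (n+2)), ψ (w j) = μ (Function.update c j ψ) := by
      intro ψ j
      rw [hwdef]
      exact Module.apply_evalEquiv_symm_apply ℝ E ψ _
    set v0 : E := (Module.evalEquiv ℝ E).symm
      { toFun := fun ψ => Λ (Fin.cons ψ c),
        map_add' := fun ψ ζ => by
          have e1 := AlternatingMap.map_update_add Λ
            (Fin.cons (0 : Module.Dual ℝ E) c) (0 : Fin (n+3)) ψ ζ
          simpa [Fin.update_cons_zero] using e1,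
        map_smul' := fun r ψ => by
          have e1 := AlternatingMap.map_update_smul Λ
            (Fin.cons (0 : Module.Dual ℝ E) c) (0 : Fin (n+3)) r ψ
          simpa [Fin.update_cons_zero] using e1 } with hv0def
    have hv0 : ∀ ψ : Module.Dual ℝ E, ψ v0 = Λ (Fin.cons ψ c) := by
      intro ψ
      rw [hv0def]
      exact Module.apply_evalEquiv_symm_apply ℝ E ψ _
    set u : Fin (n+3) → E := Fin.cons v0 w with hudef
    have hdelta : ∀ i j : Fin (n+3),
        (Fin.cons astar c : Fin (n+3) → Module.Dual ℝ E) i (u j) = if i = j then 1 else 0 := by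
      intro i j
      induction i using Fin.cases with
      | zero =>
          induction j using Fin.cases with
          | zero => simp [hudef, hv0, ← hμapp, hc]
          | succ m =>
              rw [hudef]
              simp only [Fin.cons_zero, Fin.cons_succ]
              rw [hw astar m, hμapp]
              rw [if_neg (Fin.succ_ne_zero m).symm]
              refine AlternatingMap.map_eq_zero_of_eq _ _
                (i := 0) (j := Fin.succ m) ?_ (Fin.succ_ne_zero m).symm
              simp
      | succ l =>
          induction j using Fin.cases with
          | zero =>
              rw [hudef]
              simp only [Fin.cons_zero, Fin.cons_succ]
              rw [hv0 (c l)]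
              rw [if_neg (Fin.succ_ne_zero l)]
              refine AlternatingMap.map_eq_zero_of_eq _ _
                (i := 0) (j := Fin.succ l) ?_ (Fin.succ_ne_zero l).symm
              simp
          | succ m =>
              rw [hudef]
              simp only [Fin.cons_succ]
              rw [hw (c l) m, delta_lemma μ c hc m l]
              have : (Fin.succ l = Fin.succ m) ↔ (l = m) := by
                constructor
                · exact fun hh => Fin.succ_injective _ hh
                · exact fun hh => hh ▸ rfl
              simp [this]
    
    have SUPP : ∀ φ : Module.Dual ℝ E, (∀ j, φ (u j) = 0) →
        ∀ x : Fin (n+2) → Module.Dual ℝ E, Λ (Fin.snoc x φ) = 0 := by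
      intro φ hφ
      have hφw : ∀ j : Fin (n+2), φ (w j) = 0 := by
        intro j
        have h2 := hφ (Fin.succ j)
        rwa [hudef, Fin.cons_succ] at h2
      have hφv0 : Λ (Fin.cons φ c) = 0 := by
        rw [← hv0]
        have h2 := hφ 0
        rwa [hudef, Fin.cons_zero] at h2
      have K1 : ∀ (z : Fin (n+2) → Module.Dual ℝ E) (i : Fin (n+2)), z i = φ → μ z = 0 := by
        intro z i hzi
        rw [DET z]
        refine Matrix.det_eq_zero_of_row_eq_zero i fun j => ?_
        simp only [Matrix.of_apply]
        rw [hzi, ← hw φ j]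
        exact hφw j
      have K2 : ∀ σ : Equiv.Perm (Fin (n+2)), Λ (Fin.cons φ (c ∘ ⇑σ)) = 0 := by
        intro σ
        have e1 : Λ (Fin.cons φ (c ∘ ⇑σ)) = (Λ.curryLeft φ) (c ∘ ⇑σ) := rfl
        have e2 : (Λ.curryLeft φ) c = 0 := hφv0
        rw [e1, AlternatingMap.map_perm, e2, smul_zero]
      have S1 : ∀ (k : Fin (n+2)) (a : Module.Dual ℝ E),
          Λ (Fin.cons a (Fin.snoc (c ∘ k.succAbove) φ)) = 0 := by
        intro k a
        set m : Fin (n+2) := k.succAbove 0 with hm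
        set D : Fin n → Module.Dual ℝ E := c ∘ k.succAbove ∘ Fin.succ with hD
        have hinst := h a (c m) (Fin.cons astar D) (Fin.snoc c φ)
        have hff : ∀ (b ξ : Module.Dual ℝ E),
            Λ (Fin.snoc (Fin.snoc (Fin.cons astar D) b) ξ)
              = μ (Fin.snoc (Fin.snoc D b) ξ) := by
          intro b ξ
          rw [hμapp, ← cons_snoc_comm, ← cons_snoc_comm]
        -- first sum vanishes
        have hSum1 : ∑ i : Fin (n+3), (-1:ℝ)^(i:ℕ) *
            (Λ (Fin.snoc (Fin.snoc (Fin.cons astar D) a) ((Fin.snoc c φ : Fin (n+3) → _) i)) *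
              Λ (Fin.cons (c m) ((Fin.snoc c φ : Fin (n+3) → _) ∘ i.succAbove))) = 0 := by
          refine Finset.sum_eq_zero fun i _ => ?_
          induction i using Fin.lastCases with
          | last =>
              rw [snoc_comp_succAbove_last c φ]
              have e3 : Λ (Fin.cons (c m) c) = 0 :=
                AlternatingMap.map_eq_zero_of_eq _ _ (i := (0 : Fin (n+3))) (j := Fin.succ m)
                  (by simp) (Fin.succ_ne_zero m).symm
              rw [e3, mul_zero, mul_zero]
          | cast j =>
              rw [snoc_comp_succAbove_castSucc c φ j]
              by_cases hjm : j = m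
              · rw [hjm]
                have e9 : Λ (Fin.cons (c m) (Fin.snoc (c ∘ m.succAbove) φ)) = 0 := by
                  rw [cons_snoc_comm, alt_snoc_rot, cons_comp_cycleRange c m]
                  exact mul_eq_zero_of_right _ (K2 _)
                rw [e9, mul_zero, mul_zero]
              · obtain ⟨l, hl⟩ := Fin.exists_succAbove_eq (Ne.symm hjm)
                have e3 : Λ (Fin.cons (c m) (Fin.snoc (c ∘ j.succAbove) φ)) = 0 := by
                  refine AlternatingMap.map_eq_zero_of_eq _ _
                    (i := (0 : Fin (n+3))) (j := Fin.succ (Fin.castSucc l)) ?_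
                    (Fin.succ_ne_zero _).symm
                  rw [Fin.cons_zero, Fin.cons_succ, Fin.snoc_castSucc, Function.comp_apply, hl]
                rw [e3, mul_zero, mul_zero]
        -- second sum has a single surviving term
        have hzero2 : ∀ i : Fin (n+3), i ≠ Fin.castSucc k →
            (-1:ℝ)^(i:ℕ) *
              (Λ (Fin.snoc (Fin.snoc (Fin.cons astar D) (c m)) ((Fin.snoc c φ : Fin (n+3) → _) i)) *
                Λ (Fin.cons a ((Fin.snoc c φ : Fin (n+3) → _) ∘ i.succAbove))) = 0 := by
          intro i hik
          induction i using Fin.lastCases with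
          | last =>
              rw [Fin.snoc_last, hff]
              rw [K1 (Fin.snoc (Fin.snoc D (c m)) φ) (Fin.last (n+1)) (by simp)]
              rw [zero_mul, mul_zero]
          | cast j =>
              have hjk : j ≠ k := fun hh => hik (by rw [hh])
              rw [Fin.snoc_castSucc, hff]
              have e3 : μ (Fin.snoc (Fin.snoc D (c m)) (c j)) = 0 := by
                by_cases hjm : j = m
                · refine AlternatingMap.map_eq_zero_of_eq _ _
                    (i := Fin.castSucc (Fin.last n)) (j := Fin.last (n+1)) ?_
                    (Fin.castSucc_lt_last _).ne
                  rw [Fin.snoc_castSucc, Fin.snoc_last, Fin.snoc_last, hjm]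
                · obtain ⟨l, hl⟩ := Fin.exists_succAbove_eq hjk
                  have hl0 : l ≠ 0 := by
                    intro hh
                    refine hjm ?_
                    rw [← hl, hh]
                  obtain ⟨l', hl'⟩ := Fin.exists_succ_eq.mpr hl0
                  refine AlternatingMap.map_eq_zero_of_eq _ _
                    (i := Fin.castSucc (Fin.castSucc l')) (j := Fin.last (n+1)) ?_
                    (Fin.castSucc_lt_last _).ne
                  rw [Fin.snoc_castSucc, Fin.snoc_castSucc, Fin.snoc_last, hD,
                    Function.comp_apply, Function.comp_apply, hl', hl]
              rw [e3, zero_mul, mul_zero]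
        -- the surviving coefficient is invertible
        set p : Fin (n+2) → Fin (n+2) :=
          Fin.snoc (k.succAbove ∘ ⇑(finRotate (n+1))) k with hpdef
        have hrot : ∀ l' : Fin n, finRotate (n+1) (Fin.castSucc l') = Fin.succ l' := by
          intro l'
          ext
          rw [coe_finRotate]
          simp [(Fin.castSucc_lt_last l').ne]
        have hp : Function.Injective p := by
          intro i1 i2 h12
          induction i1 using Fin.lastCases with
          | last =>
              induction i2 using Fin.lastCases with
              | last => rfl
              | cast l2 =>
                  exfalso
                  rw [hpdef, Fin.snoc_last, Fin.snoc_castSucc] at h12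
                  exact (Fin.succAbove_ne k _) h12.symm
          | cast l1 =>
              induction i2 using Fin.lastCases with
              | last =>
                  exfalso
                  rw [hpdef, Fin.snoc_last, Fin.snoc_castSucc] at h12
                  exact (Fin.succAbove_ne k _) h12
              | cast l2 =>
                  rw [hpdef, Fin.snoc_castSucc, Fin.snoc_castSucc] at h12
                  have := Fin.succAbove_right_injective (p := k) h12
                  have := (finRotate (n+1)).injective this
                  rw [this]
        have hcp : Fin.snoc (Fin.snoc D (c m)) (c k) = c ∘ p := by
          rw [hpdef, Fin.comp_snoc]
          funext l
          induction l using Fin.lastCases with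
          | last => rw [Fin.snoc_last, Fin.snoc_last]
          | cast l' =>
              rw [Fin.snoc_castSucc, Fin.snoc_castSucc]
              induction l' using Fin.lastCases with
              | last =>
                  rw [Fin.snoc_last]
                  show c m = c (k.succAbove (finRotate (n+1) (Fin.last n)))
                  rw [finRotate_last]
              | cast l'' =>
                  rw [Fin.snoc_castSucc]
                  show D l'' = c (k.succAbove (finRotate (n+1) (Fin.castSucc l'')))
                  rw [hrot l'', hD]
                  rfl
        obtain ⟨ε, hε1, hε2⟩ := alt_comp_injective μ c p hp
        have hCst : μ (Fin.snoc (Fin.snoc D (c m)) (c k)) = ε := by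
          rw [hcp, hε2, hc, mul_one]
        have hεne : ε ≠ 0 := by rcases hε1 with rfl | rfl <;> norm_num
        -- assemble
        have hSum2 : ∑ i : Fin (n+3), (-1:ℝ)^(i:ℕ) *
            (Λ (Fin.snoc (Fin.snoc (Fin.cons astar D) (c m)) ((Fin.snoc c φ : Fin (n+3) → _) i)) *
              Λ (Fin.cons a ((Fin.snoc c φ : Fin (n+3) → _) ∘ i.succAbove)))
            = (-1:ℝ)^((Fin.castSucc k : Fin (n+3)) : ℕ) *
              (ε * Λ (Fin.cons a (Fin.snoc (c ∘ k.succAbove) φ))) := by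
          rw [Finset.sum_eq_single_of_mem (Fin.castSucc k) (Finset.mem_univ _)
            (fun i _ hik => hzero2 i hik)]
          rw [Fin.snoc_castSucc, hff, hCst, snoc_comp_succAbove_castSucc c φ k]
        rw [hSum1, hSum2, zero_add] at hinst
        have hpow : ((-1:ℝ))^((Fin.castSucc k : Fin (n+3)) : ℕ) ≠ 0 := pow_ne_zero _ (by norm_num)
        have := mul_eq_zero.mp hinst
        rcases this with hbad | hgood
        · exact absurd hbad hpow
        · rcases mul_eq_zero.mp hgood with hbad | hgood2
          · exact absurd hbad hεne
          · exact hgood2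
      -- S2 : the general statement
      intro x
      have hinst := h (x (Fin.last (n+1))) astar (Fin.init x) (Fin.cons φ c)
      have hS1 : ∑ i : Fin (n+3), (-1:ℝ)^(i:ℕ) *
          (Λ (Fin.snoc (Fin.snoc (Fin.init x) (x (Fin.last (n+1)))) ((Fin.cons φ c : Fin (n+3) → _) i)) *
            Λ (Fin.cons astar ((Fin.cons φ c : Fin (n+3) → _) ∘ i.succAbove)))
          = Λ (Fin.snoc x φ) := by
        rw [Fin.sum_univ_succ]
        have e0 : (-1:ℝ)^(((0 : Fin (n+3))):ℕ) *
            (Λ (Fin.snoc (Fin.snoc (Fin.init x) (x (Fin.last (n+1)))) ((Fin.cons φ c : Fin (n+3) → _) 0)) *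
              Λ (Fin.cons astar ((Fin.cons φ c : Fin (n+3) → _) ∘ (0 : Fin (n+3)).succAbove)))
            = Λ (Fin.snoc x φ) := by
          rw [cons_comp_succAbove_zero, ← hμapp, hc]
          show (-1:ℝ)^((0:ℕ)) * (Λ (Fin.snoc (Fin.snoc (Fin.init x) (x (Fin.last (n+1))))
            ((Fin.cons φ c : Fin (n+3) → _) 0)) * 1) = Λ (Fin.snoc x φ)
          rw [Fin.cons_zero, Fin.snoc_init_self]
          norm_num
        rw [e0]
        have erest : ∀ j : Fin (n+2), (-1:ℝ)^((Fin.succ j : Fin (n+3)):ℕ) *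
            (Λ (Fin.snoc (Fin.snoc (Fin.init x) (x (Fin.last (n+1)))) ((Fin.cons φ c : Fin (n+3) → _) (Fin.succ j))) *
              Λ (Fin.cons astar ((Fin.cons φ c : Fin (n+3) → _) ∘ (Fin.succ j).succAbove))) = 0 := by
          intro j
          rw [cons_comp_succAbove_succ, ← hμapp]
          rw [K1 (Fin.cons φ (c ∘ j.succAbove)) 0 (by rw [Fin.cons_zero])]
          rw [mul_zero, mul_zero]
        rw [Finset.sum_congr rfl (fun j _ => erest j), Finset.sum_const_zero, add_zero]
      have hS2 : ∑ i : Fin (n+3), (-1:ℝ)^(i:ℕ) *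
          (Λ (Fin.snoc (Fin.snoc (Fin.init x) astar) ((Fin.cons φ c : Fin (n+3) → _) i)) *
            Λ (Fin.cons (x (Fin.last (n+1))) ((Fin.cons φ c : Fin (n+3) → _) ∘ i.succAbove))) = 0 := by
        refine Finset.sum_eq_zero fun i _ => ?_
        induction i using Fin.cases with
        | zero =>
            have e2 : (Fin.cons astar (Fin.snoc (Fin.init x) φ) : Fin (n+3) → Module.Dual ℝ E)
                = Fin.cons ((Fin.snoc (Fin.snoc (Fin.init x) astar) φ : Fin (n+3) → Module.Dual ℝ E)
                    (Fin.castSucc (Fin.last (n+1))))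
                  ((Fin.snoc (Fin.snoc (Fin.init x) astar) φ : Fin (n+3) → Module.Dual ℝ E)
                    ∘ (Fin.castSucc (Fin.last (n+1))).succAbove) := by
              rw [snoc_snoc_comp_succAbove, snoc_snoc_at_penult]
            have e3 : (-1:ℝ)^(n+1) * Λ (Fin.snoc (Fin.snoc (Fin.init x) astar) φ)
                = μ (Fin.snoc (Fin.init x) φ) := by
              rw [hμapp, e2, alt_cons]
              norm_num
            have e4 : μ (Fin.snoc (Fin.init x) φ) = 0 :=
              K1 _ (Fin.last (n+1)) (by simp)
            have e5 : Λ (Fin.snoc (Fin.snoc (Fin.init x) astar) φ) = 0 := by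
              have hpow : ((-1:ℝ))^(n+1) ≠ 0 := pow_ne_zero _ (by norm_num)
              rcases mul_eq_zero.mp (e3.trans e4) with hbad | hgood
              · exact absurd hbad hpow
              · exact hgood
            rw [Fin.cons_zero, e5, zero_mul, mul_zero]
        | succ j =>
            rw [cons_comp_succAbove_succ]
            have e2 : Λ (Fin.cons (x (Fin.last (n+1))) (Fin.cons φ (c ∘ j.succAbove))) = 0 := by
              have e3 : (Λ.curryLeft (x (Fin.last (n+1)))) (Fin.snoc (c ∘ j.succAbove) φ)
                  = (-1:ℝ)^(n+1) * (Λ.curryLeft (x (Fin.last (n+1)))) (Fin.cons φ (c ∘ j.succAbove)) :=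
                alt_snoc_rot _ _ _
              have e4 : (Λ.curryLeft (x (Fin.last (n+1)))) (Fin.snoc (c ∘ j.succAbove) φ) = 0 :=
                S1 j (x (Fin.last (n+1)))
              have hpow : ((-1:ℝ))^(n+1) ≠ 0 := pow_ne_zero _ (by norm_num)
              have e5 : (Λ.curryLeft (x (Fin.last (n+1)))) (Fin.cons φ (c ∘ j.succAbove)) = 0 := by
                rcases mul_eq_zero.mp (e3.symm.trans e4) with hbad | hgood
                · exact absurd hbad hpow
                · exact hgood
              exact e5
            rw [e2, mul_zero, mul_zero]
      rw [hS1, hS2, add_zero] at hinst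
      exact hinst
    
    have SUPP' : ∀ (ψ : Module.Dual ℝ E), (∀ j, ψ (u j) = 0) →
        ∀ (y : Fin (n+3) → Module.Dual ℝ E) (i : Fin (n+3)), y i = ψ → Λ y = 0 := by
      intro ψ hψ y i hyi
      rcases eq_or_ne i (Fin.last (n+2)) with rfl | hne
      · rw [← Fin.snoc_init_self y, hyi]
        exact SUPP ψ hψ (Fin.init y)
      · have hswap := AlternatingMap.map_swap Λ y (i := i) (j := Fin.last (n+2)) hne
        have e2 : Λ (y ∘ ⇑(Equiv.swap i (Fin.last (n+2)))) = 0 := by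
          have e3 : (y ∘ ⇑(Equiv.swap i (Fin.last (n+2)))) (Fin.last (n+2)) = ψ := by
            rw [Function.comp_apply, Equiv.swap_apply_right, hyi]
          rw [← Fin.snoc_init_self (y ∘ ⇑(Equiv.swap i (Fin.last (n+2)))), e3]
          exact SUPP ψ hψ _
        rw [e2] at hswap
        linarith
    -- final expansion
    refine ⟨u, fun α => ?_⟩
    set A : Matrix (Fin (n+3)) (Fin (n+3)) ℝ := Matrix.of (fun i j => α i (u j)) with hA
    set ee : Fin (n+3) → Module.Dual ℝ E := Fin.cons astar c with heps
    have hδ : ∀ i j, (ee i) (u j) = if i = j then 1 else 0 := hdelta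
    set β : Fin (n+3) → Module.Dual ℝ E := fun i => ∑ j, A i j • ee j with hβ
    have hρ : ∀ i j, (α i - β i) (u j) = 0 := by
      intro i j
      rw [LinearMap.sub_apply, hβ]
      have e1 : (∑ j' : Fin (n+3), A i j' • ee j') (u j)
          = ∑ j' : Fin (n+3), A i j' * (ee j') (u j) := by
        rw [LinearMap.coe_sum, Finset.sum_apply]
        refine Finset.sum_congr rfl fun j' _ => ?_
        rw [LinearMap.smul_apply, smul_eq_mul]
      rw [e1]
      have e2 : ∑ j' : Fin (n+3), A i j' * (ee j') (u j) = A i j := by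
        have e3 : ∀ j' : Fin (n+3), A i j' * (ee j') (u j) = if j' = j then A i j' else 0 := by
          intro j'
          rw [hδ j' j]
          split_ifs <;> ring
        rw [Finset.sum_congr rfl fun j' _ => e3 j', Finset.sum_ite_eq' Finset.univ j]
        simp
      rw [e2]
      have e4 : α i (u j) = A i j := rfl
      rw [e4, sub_self]
    have hrepl : ∀ S : Finset (Fin (n+3)), Λ (fun i => if i ∈ S then β i else α i) = Λ α := by
      intro S
      induction S using Finset.induction_on with
      | empty => simp
      | @insert i0 S hiS ih =>
          have e1 : (fun i => if i ∈ insert i0 S then β i else α i)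
              = Function.update (fun i => if i ∈ S then β i else α i) i0 (β i0) := by
            funext i'
            rcases eq_or_ne i' i0 with rfl | hne
            · rw [Function.update_self, if_pos (Finset.mem_insert_self _ _)]
            · rw [Function.update_of_ne hne]
              simp [Finset.mem_insert, hne]
          rw [e1]
          have e2 : β i0 = (β i0 - α i0) + α i0 := by abel
          rw [e2, AlternatingMap.map_update_add]
          have e3 : Λ (Function.update (fun i => if i ∈ S then β i else α i) i0 (β i0 - α i0))
              = 0 := by
            refine SUPP' (β i0 - α i0) ?_ _ i0 (Function.update_self _ _ _)
            intro j
            have e5 := hρ i0 j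
            rw [LinearMap.sub_apply] at e5 ⊢
            linarith
          rw [e3, zero_add]
          have e4 : Function.update (fun i => if i ∈ S then β i else α i) i0 (α i0)
              = (fun i => if i ∈ S then β i else α i) := by
            funext i'
            rcases eq_or_ne i' i0 with rfl | hne
            · rw [Function.update_self, if_neg hiS]
            · rw [Function.update_of_ne hne]
          rw [e4, ih]
    have hαβ : Λ α = Λ β := by
      have e1 := hrepl Finset.univ
      simp only [Finset.mem_univ, if_true] at e1
      exact e1.symm
    rw [hαβ]
    have hexp : Λ β = ∑ F : Fin (n+3) → Fin (n+3), Λ (fun i => A i (F i) • ee (F i)) := by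
      rw [hβ]
      exact Λ.toMultilinearMap.map_sum (fun i j => A i j • ee j)
    rw [hexp]
    have hterm : ∀ F : Fin (n+3) → Fin (n+3), Λ (fun i => A i (F i) • ee (F i))
        = (∏ i, A i (F i)) * Λ (ee ∘ F) := by
      intro F
      have e1 := Λ.toMultilinearMap.map_smul_univ (fun i => A i (F i)) (fun i => ee (F i))
      rw [smul_eq_mul] at e1
      exact e1
    rw [Finset.sum_congr rfl fun F _ => hterm F]
    have hee1 : Λ ee = 1 := by
      rw [heps, ← hμapp, hc]
    have hnoninj : ∀ F : Fin (n+3) → Fin (n+3), ¬ Function.Injective F →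
        (∏ i, A i (F i)) * Λ (ee ∘ F) = 0 := by
      intro F hF
      obtain ⟨i1, i2, he, hne⟩ := Function.not_injective_iff.mp hF
      have e1 : Λ (ee ∘ F) = 0 := by
        refine AlternatingMap.map_eq_zero_of_eq _ _ (i := i1) (j := i2) ?_ hne
        rw [Function.comp_apply, Function.comp_apply, he]
      rw [e1, mul_zero]
    have hfilter : ∑ F : Fin (n+3) → Fin (n+3), (∏ i, A i (F i)) * Λ (ee ∘ F)
        = ∑ F ∈ Finset.univ.filter (fun F : Fin (n+3) → Fin (n+3) => Function.Injective F),
            (∏ i, A i (F i)) * Λ (ee ∘ F) := by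
      symm
      refine Finset.sum_filter_of_ne fun F _ hne => ?_
      by_contra hni
      exact hne (hnoninj F hni)
    rw [hfilter]
    have hbij : ∑ F ∈ Finset.univ.filter (fun F : Fin (n+3) → Fin (n+3) => Function.Injective F),
            (∏ i, A i (F i)) * Λ (ee ∘ F)
        = ∑ σ : Equiv.Perm (Fin (n+3)), (∏ i, A i (σ i)) * Λ (ee ∘ ⇑σ) := by
      refine Finset.sum_bij'
        (i := fun F hF => Equiv.ofBijective F ((Finite.injective_iff_bijective).mp
          (by simpa using hF)))
        (j := fun σ _ => ⇑σ) ?_ ?_ ?_ ?_ ?_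
      · intro F hF
        exact Finset.mem_univ _
      · intro σ _
        simp [Equiv.injective]
      · intro F hF
        rfl
      · intro σ _
        exact Equiv.ext fun x => rfl
      · intro F hF
        rfl
    rw [hbij]
    have hperm : ∀ σ : Equiv.Perm (Fin (n+3)),
        (∏ i, A i (σ i)) * Λ (ee ∘ ⇑σ)
          = ((Equiv.Perm.sign σ : ℤ) : ℝ) * ∏ i, A i (σ i) := by
      intro σ
      rw [AlternatingMap.map_perm, hee1, sign_smul_real, mul_one]
      ring
    rw [Finset.sum_congr rfl fun σ _ => hperm σ]
    rw [← Matrix.det_transpose A, Matrix.det_apply']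
    refine Finset.sum_congr rfl fun σ _ => ?_
    refine congrArg _ (Finset.prod_congr rfl fun i _ => ?_)
    rw [Matrix.transpose_apply]
end

section
/- Let M be a finite-dimensional manifold, U ⊆ M open, and let P be an r-linear map assigning to covectors a tangent vector, giving a bracket {f₁,...,f_r}_P = ⟨df_r, P(df₁,...,df_{r−1})⟩ on C^∞(U) which satisfies the fundamental identity. Then for the Hamiltonian vector fields X_{f₁,...,f_{r−1}} = P(df₁,...,df_{r−1}), one has: [X_{f₁,...,f_{r−1}}, X_{g₁,...,g_{r−1}}](h) = Σ_{i=1}^{r−1} X_{g₁,...,g_{i−1}, {f₁,...,f_{r−1},g_i}_P, g_{i+1},...,g_{r−1}}(h) for all smooth h on U. -/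
/-- The Hamiltonian vector field `X_{f₁,…,f_{r−1}} = P(df₁,…,df_{r−1})`
associated to an anchor `P` (here r−1 = s, on ℝⁿ). -/
noncomputable def hamVF (n s : ℕ)
    (P : (Fin n → ℝ) → (Fin s → ((Fin n → ℝ) →L[ℝ] ℝ)) → (Fin n → ℝ))
    (f : Fin s → ((Fin n → ℝ) → ℝ)) (x : Fin n → ℝ) : Fin n → ℝ :=
  P x (fun i => fderiv ℝ (f i) x)

/-- The bracket `{f₁,…,f_{r−1},g}_P = ⟨dg, P(df₁,…,df_{r−1})⟩`. -/
noncomputable def nbP (n s : ℕ)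
    (P : (Fin n → ℝ) → (Fin s → ((Fin n → ℝ) →L[ℝ] ℝ)) → (Fin n → ℝ))
    (f : Fin s → ((Fin n → ℝ) → ℝ)) (g : (Fin n → ℝ) → ℝ) (x : Fin n → ℝ) : ℝ :=
  fderiv ℝ g x (hamVF n s P f x)

/-- The full r-bracket `{h₁,…,h_r}_P` of r = s+1 functions. -/
noncomputable def fullBrP (n s : ℕ)
    (P : (Fin n → ℝ) → (Fin s → ((Fin n → ℝ) →L[ℝ] ℝ)) → (Fin n → ℝ))
    (h : Fin (s+1) → ((Fin n → ℝ) → ℝ)) (x : Fin n → ℝ) : ℝ :=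
  nbP n s P (fun i : Fin s => h i.castSucc) (h (Fin.last s)) x

/- Formula (3.5): if the bracket associated to a smooth skew-symmetric anchor P
satisfies the fundamental identity, then
[X_{f₁,…,f_{r−1}}, X_{g₁,…,g_{r−1}}](h)
  = Σᵢ X_{g₁,…,g_{i−1},{f₁,…,f_{r−1},g_i}_P,g_{i+1},…,g_{r−1}}(h). -/
theorem stmt_10 (n s : ℕ)
    (P : (Fin n → ℝ) → (Fin s → ((Fin n → ℝ) →L[ℝ] ℝ)) → (Fin n → ℝ))
    (hPsmooth : ContDiff ℝ (⊤ : ℕ∞)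
      (fun p : (Fin n → ℝ) × (Fin s → ((Fin n → ℝ) →L[ℝ] ℝ)) => P p.1 p.2))
    (hPalt : ∀ x, ∃ Q : AlternatingMap ℝ ((Fin n → ℝ) →L[ℝ] ℝ) (Fin n → ℝ) (Fin s),
      ∀ α, Q α = P x α)
    (hFI : ∀ (f : Fin s → ((Fin n → ℝ) → ℝ)) (g : Fin (s+1) → ((Fin n → ℝ) → ℝ)),
      (∀ i, ContDiff ℝ (⊤ : ℕ∞) (f i)) → (∀ i, ContDiff ℝ (⊤ : ℕ∞) (g i)) →
      ∀ x, nbP n s P f (fullBrP n s P g) x =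
        ∑ i : Fin (s+1),
          fullBrP n s P (Function.update g i (nbP n s P f (g i))) x)
    (f g : Fin s → ((Fin n → ℝ) → ℝ))
    (hf : ∀ i, ContDiff ℝ (⊤ : ℕ∞) (f i)) (hg : ∀ i, ContDiff ℝ (⊤ : ℕ∞) (g i))
    (h : (Fin n → ℝ) → ℝ) (hh : ContDiff ℝ (⊤ : ℕ∞) h) (x : Fin n → ℝ) :
    fderiv ℝ (fun y => fderiv ℝ h y (hamVF n s P g y)) x (hamVF n s P f x) -
      fderiv ℝ (fun y => fderiv ℝ h y (hamVF n s P f y)) x (hamVF n s P g x) =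
    ∑ i : Fin s,
      fderiv ℝ h x (hamVF n s P (Function.update g i (nbP n s P f (g i))) x) := by
  have hsnoc : ∀ i, ContDiff ℝ (⊤ : ℕ∞) ((Fin.snoc g h : Fin (s+1) → (Fin n → ℝ) → ℝ) i) := by
    intro i
    refine Fin.lastCases ?_ ?_ i
    · simpa using hh
    · intro j; simpa using hg j
  have key := hFI f (Fin.snoc g h) hf hsnoc x
  have e1 : fullBrP n s P (Fin.snoc g h : Fin (s+1) → (Fin n → ℝ) → ℝ) = nbP n s P g h := by
    funext y
    simp [fullBrP, nbP, hamVF]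
  rw [e1] at key
  rw [Fin.sum_univ_castSucc] at key
  have e2 : ∀ (j : Fin s),
      fullBrP n s P (Function.update (Fin.snoc g h : Fin (s+1) → (Fin n → ℝ) → ℝ) (Fin.castSucc j)
        (nbP n s P f ((Fin.snoc g h : Fin (s+1) → (Fin n → ℝ) → ℝ) (Fin.castSucc j)))) x
      = fderiv ℝ h x (hamVF n s P (Function.update g j (nbP n s P f (g j))) x) := by
    intro j
    rw [Fin.snoc_castSucc, ← Fin.snoc_update]
    simp [fullBrP, nbP, hamVF]
  have e3 : fullBrP n s P (Function.update (Fin.snoc g h : Fin (s+1) → (Fin n → ℝ) → ℝ) (Fin.last s)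
      (nbP n s P f ((Fin.snoc g h : Fin (s+1) → (Fin n → ℝ) → ℝ) (Fin.last s)))) x
      = fderiv ℝ (fun y => fderiv ℝ h y (hamVF n s P f y)) x (hamVF n s P g x) := by
    rw [Fin.snoc_last, Fin.update_snoc_last]
    simp only [fullBrP, nbP, hamVF, Fin.snoc_castSucc, Fin.snoc_last]
    rfl
  simp only [e2, e3] at key
  have e4 : nbP n s P f (nbP n s P g h) x
      = fderiv ℝ (fun y => fderiv ℝ h y (hamVF n s P g y)) x (hamVF n s P f x) := by
    rfl
  rw [e4] at key
  linarith [key]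
end

section
/- Let P: (T*M)^{r−1} → TM be a skew-symmetric bundle morphism on a finite-dimensional manifold with associated r-vector Λ defined by Λ(α₀,...,α_{r−1}) = ⟨α₀, P(α₁,...,α_{r−1})⟩. At any point x where the image of P_x has dimension strictly less than r, the image of P_x is zero, i.e. the rank of P at any point is either 0 or at least r. -/
/- Lemma 3.15 (pointwise, finite dimension): if P : (T_x*M)^{r−1} → T_xM is
skew-symmetric (the associated r-form Λ(α₀,α) = α₀(P(α)) is alternating) and
the image of P has dimension strictly less than r = s+1, then P = 0. -/
theorem stmt_15 {E : Type*} [AddCommGroup E] [Module ℝ E] [FiniteDimensional ℝ E]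
    (s : ℕ) (P : (Fin s → Module.Dual ℝ E) → E)
    (hΛ : ∃ A : AlternatingMap ℝ (Module.Dual ℝ E) ℝ (Fin (s+1)),
      ∀ (α₀ : Module.Dual ℝ E) (α : Fin s → Module.Dual ℝ E),
        A (Fin.cons α₀ α) = α₀ (P α))
    (hrank : Module.finrank ℝ (Submodule.span ℝ (Set.range P)) < s + 1) :
    ∀ α, P α = 0 := by
  obtain ⟨A, hA⟩ := hΛ
  set V := Submodule.span ℝ (Set.range P) with hV
  have hPV : ∀ α, P α ∈ V := fun α => Submodule.subset_span ⟨α, rfl⟩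
  -- Step 1: A vanishes if the 0-th slot annihilates V
  have h0 : ∀ (β : Fin (s+1) → Module.Dual ℝ E), (∀ v ∈ V, β 0 v = 0) → A β = 0 := by
    intro β hβ
    have : A β = A (Fin.cons (β 0) (fun i => β i.succ)) := by
      congr 1
      ext i
      refine Fin.cases rfl (fun i => rfl) i
    rw [this, hA]
    exact hβ _ (hPV _)
  -- Step 1': A vanishes if some slot annihilates V
  have hw : ∀ (β : Fin (s+1) → Module.Dual ℝ E) (j : Fin (s+1)),
      (∀ v ∈ V, β j v = 0) → A β = 0 := by
    intro β j hβ
    rcases eq_or_ne j 0 with rfl | hj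
    · exact h0 β hβ
    · have := A.map_swap β hj.symm
      have hz : A (β ∘ Equiv.swap 0 j) = 0 := by
        apply h0
        intro v hv
        simpa [Equiv.swap_apply_left] using hβ v hv
      rw [hz] at this
      linarith [this]
  -- Step 2: A = 0
  have hA0 : ∀ β : Fin (s+1) → Module.Dual ℝ E, A β = 0 := by
    intro β
    -- restrict to V
    set ρ : Module.Dual ℝ E →ₗ[ℝ] Module.Dual ℝ V := (V.subtype).dualMap with hρ
    have hnli : ¬ LinearIndependent ℝ (fun i => ρ (β i)) := by
      intro hli
      have := hli.fintype_card_le_finrank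
      rw [Subspace.dual_finrank_eq] at this
      simp only [Fintype.card_fin] at this
      omega
    rw [Fintype.not_linearIndependent_iff] at hnli
    obtain ⟨g, hg, j, hgj⟩ := hnli
    -- for every v ∈ V, ∑ i, g i * β i v = 0
    have hsum : ∀ v ∈ V, (∑ i, g i * β i v) = 0 := by
      intro v hv
      have := congrArg (fun φ => φ ⟨v, hv⟩) hg
      simpa [ρ, Finset.sum_apply] using this
    set t : Module.Dual ℝ E := ∑ i ∈ Finset.univ.erase j, g i • β i with ht
    set w : Module.Dual ℝ E := β j + (g j)⁻¹ • t with hwdef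
    have hwann : ∀ v ∈ V, w v = 0 := by
      intro v hv
      have h1 : (∑ i, g i * β i v) = g j * β j v + ∑ i ∈ Finset.univ.erase j, g i * β i v := by
        rw [← Finset.add_sum_erase _ _ (Finset.mem_univ j)]
      have h2 := hsum v hv
      have htv : t v = ∑ i ∈ Finset.univ.erase j, g i * β i v := by
        simp [ht, LinearMap.sum_apply]
      have : w v = β j v + (g j)⁻¹ * t v := by simp [hwdef]
      rw [this, htv]
      rw [h1] at h2
      field_simp
      linarith
    -- linear map in slot j
    set L : Module.Dual ℝ E →ₗ[ℝ] ℝ :=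
      (A : MultilinearMap ℝ (fun _ : Fin (s+1) => Module.Dual ℝ E) ℝ).toLinearMap β j with hL
    have hLdef : ∀ x, L x = A (Function.update β j x) := fun x => rfl
    have hLβ : ∀ i ∈ Finset.univ.erase j, L (β i) = 0 := by
      intro i hi
      have hij : i ≠ j := (Finset.mem_erase.mp hi).1
      rw [hLdef]
      refine A.map_eq_zero_of_eq _ (i := i) (j := j) ?_ hij
      rw [Function.update_of_ne hij, Function.update_self]
    have hLt : L t = 0 := by
      rw [ht, map_sum]
      refine Finset.sum_eq_zero fun i hi => ?_
      rw [map_smul, hLβ i hi, smul_zero]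
    have hLw : L w = 0 := by
      rw [hLdef]
      apply hw _ j
      intro v hv
      rw [Function.update_self]
      exact hwann v hv
    have hβj : β j = w - (g j)⁻¹ • t := by rw [hwdef]; ring_nf; abel
    calc A β = L (β j) := by rw [hLdef, Function.update_eq_self]
      _ = L w - (g j)⁻¹ • L t := by rw [hβj, map_sub, map_smul]
      _ = 0 := by rw [hLw, hLt, smul_zero, sub_zero]
  intro α
  rw [← Module.forall_dual_apply_eq_zero_iff ℝ]
  intro α₀
  rw [← hA α₀ α, hA0]
end

section
/- Let Λ be a smooth r-vector field on a finite-dimensional manifold M and define, for (r−1)-forms α, β, the bracket [α, β]_P = L_{Λ^♯(α)} β + (−1)^r (i_{dα} Λ) β. Then for all smooth functions f₁,...,f_{r−1}, g₁,...,g_{r−1} one has [df₁ ∧ ⋯ ∧ df_{r−1}, dg₁ ∧ ⋯ ∧ dg_{r−1}]_P = Σ_{i=1}^{r−1} dg₁ ∧ ⋯ ∧ d{f₁,...,f_{r−1},g_i} ∧ ⋯ ∧ dg_{r−1}, where {·,...,·} is the bracket defined by Λ. -/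
open Finset Matrix

section AuxNambu

lemma clm_apply_eq_sum {n : ℕ} (L : (Fin n → ℝ) →L[ℝ] ℝ) (u : Fin n → ℝ) :
    L u = ∑ k, u k * L (Pi.single k 1) := by
  have h : u = ∑ k, u k • (Pi.single k 1 : Fin n → ℝ) := by
    ext j
    simp [Finset.sum_apply, Pi.single_apply]
  calc L u = L (∑ k, u k • (Pi.single k 1 : Fin n → ℝ)) := by rw [← h]
  _ = ∑ k, u k * L (Pi.single k 1) := by
      rw [map_sum]; simp [smul_eq_mul]

lemma hasFDerivAt_det {q n : ℕ} {e : Fin q → Fin q → (Fin n → ℝ) → ℝ}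
    {e' : Fin q → Fin q → ((Fin n → ℝ) →L[ℝ] ℝ)} {x : Fin n → ℝ}
    (h : ∀ a b, HasFDerivAt (e a b) (e' a b) x) :
    HasFDerivAt (fun y => (Matrix.of fun a b => e a b y).det)
      (∑ σ : Equiv.Perm (Fin q), ((Equiv.Perm.sign σ : ℤ) : ℝ) •
        ∑ i, (∏ j ∈ Finset.univ.erase i, e (σ j) j x) • e' (σ i) i) x := by
  have hfun : (fun y => (Matrix.of fun a b => e a b y).det)
      = fun y => ∑ σ : Equiv.Perm (Fin q),
          ((Equiv.Perm.sign σ : ℤ):ℝ) * ∏ i, e (σ i) i y := by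
    funext y
    rw [Matrix.det_apply]
    refine Finset.sum_congr rfl fun σ _ => ?_
    simp [Units.smul_def, zsmul_eq_mul]
  rw [hfun]
  exact HasFDerivAt.fun_sum fun (σ : Equiv.Perm (Fin q)) _ =>
    (HasFDerivAt.finset_prod (fun i _ => h (σ i) i)).const_mul _

lemma fderiv_det_apply {q n : ℕ} {e : Fin q → Fin q → (Fin n → ℝ) → ℝ}
    {e' : Fin q → Fin q → ((Fin n → ℝ) →L[ℝ] ℝ)} {x : Fin n → ℝ}
    (h : ∀ a b, HasFDerivAt (e a b) (e' a b) x) (u : Fin n → ℝ) :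
    fderiv ℝ (fun y => (Matrix.of fun a b => e a b y).det) x u
      = ∑ a, ((Matrix.of fun a' b => e a' b x).updateRow a (fun b => e' a b u)).det := by
  rw [(hasFDerivAt_det h).fderiv]
  have key : ∀ (σ : Equiv.Perm (Fin q)) (i₀ : Fin q) (r : Fin q → ℝ),
      (∏ i, if σ i = σ i₀ then r i else e (σ i) i x)
        = r i₀ * ∏ j ∈ Finset.univ.erase i₀, e (σ j) j x := by
    intro σ i₀ r
    rw [← Finset.mul_prod_erase Finset.univ _ (Finset.mem_univ i₀), if_pos rfl]
    congr 1
    refine Finset.prod_congr rfl fun j hj => ?_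
    rw [if_neg fun hc => (Finset.mem_erase.1 hj).1 (σ.injective hc)]
  have hdet : ∀ a, ((Matrix.of fun a' b => e a' b x).updateRow a (fun b => e' a b u)).det
      = ∑ σ : Equiv.Perm (Fin q), ((Equiv.Perm.sign σ : ℤ):ℝ) *
          ∏ i, (if σ i = a then e' a i u else e (σ i) i x) := by
    intro a
    rw [Matrix.det_apply]
    refine Finset.sum_congr rfl fun σ _ => ?_
    rw [Units.smul_def, zsmul_eq_mul]
    congr 1
    refine Finset.prod_congr rfl fun i _ => ?_
    rw [Matrix.updateRow_apply]
    by_cases hia : σ i = a <;> simp [hia]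
  simp only [hdet]
  rw [Finset.sum_comm]
  simp only [ContinuousLinearMap.coe_sum', Finset.sum_apply,
    ContinuousLinearMap.coe_smul', Pi.smul_apply, smul_eq_mul]
  refine Finset.sum_congr rfl fun σ _ => ?_
  rw [Finset.mul_sum]
  conv_rhs => rw [← Equiv.sum_comp σ fun a => ((Equiv.Perm.sign σ : ℤ):ℝ) *
    ∏ i, (if σ i = a then e' a i u else e (σ i) i x)]
  refine Finset.sum_congr rfl fun i₀ _ => ?_
  rw [key σ i₀ (fun i => e' (σ i₀) i u)]
  ring

lemma det_updateRow_expand {q : ℕ} (A : Matrix (Fin q) (Fin q) ℝ) (i : Fin q) (r : Fin q → ℝ) :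
    (A.updateRow i r).det = ∑ j, r j * A.adjugate j i := by
  have h : r = ∑ j, r j • (Pi.single j 1 : Fin q → ℝ) := by
    ext b; simp [Finset.sum_apply, Pi.single_apply]
  calc (A.updateRow i r).det
      = (Matrix.detRowAlternating (R := ℝ)).toMultilinearMap
          (Function.update (Matrix.of.symm A) i (∑ j, r j • (Pi.single j 1 : Fin q → ℝ))) := by rw [← h]; rfl
    _ = ∑ j, r j * A.adjugate j i := by
        rw [MultilinearMap.map_update_sum]
        refine Finset.sum_congr rfl fun j _ => ?_
        rw [MultilinearMap.map_update_smul, Matrix.adjugate_apply]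
        rfl

lemma det_updateColumn_expand {q : ℕ} (A : Matrix (Fin q) (Fin q) ℝ) (i : Fin q) (c : Fin q → ℝ) :
    (A.updateCol i c).det = ∑ j, c j * A.adjugate i j := by
  rw [← Matrix.det_transpose, ← Matrix.updateRow_transpose, det_updateRow_expand]
  refine Finset.sum_congr rfl fun j _ => ?_
  rw [← Matrix.adjugate_transpose]
  rfl

lemma lam_snoc_perm {n m : ℕ} {Λ : (Fin (m+1) → Fin n) → ℝ}
    (hsign : ∀ (v : Fin (m+1) → Fin n) (σ : Equiv.Perm (Fin (m+1))),
      Λ (v ∘ σ) = ((Equiv.Perm.sign σ : ℤ) : ℝ) * Λ v)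
    (σ : Equiv.Perm (Fin m)) (w : Fin m → Fin n) (k : Fin n) :
    Λ (Fin.snoc (w ∘ σ) k) = ((Equiv.Perm.sign σ : ℤ) : ℝ) * Λ (Fin.snoc w k) := by
  revert w
  refine Equiv.Perm.swap_induction_on σ (by simp) ?_
  intro f a b hab ih w
  have h1 : w ∘ ⇑(Equiv.swap a b * f) = (w ∘ ⇑(Equiv.swap a b)) ∘ ⇑f := rfl
  rw [h1, ih (w ∘ ⇑(Equiv.swap a b))]
  have h2 : (Fin.snoc (w ∘ ⇑(Equiv.swap a b)) k : Fin (m+1) → Fin n)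
      = (Fin.snoc w k : Fin (m+1) → Fin n) ∘ ⇑(Equiv.swap a.castSucc b.castSucc) := by
    funext c
    refine Fin.lastCases ?_ (fun c => ?_) c
    · rw [Fin.snoc_last, Function.comp_apply,
        Equiv.swap_apply_of_ne_of_ne (Fin.castSucc_lt_last a).ne' (Fin.castSucc_lt_last b).ne',
        Fin.snoc_last]
    · rw [Fin.snoc_castSucc, Function.comp_apply]
      rcases eq_or_ne c a with rfl | hca
      · rw [Equiv.swap_apply_left, Function.comp_apply, Equiv.swap_apply_left, Fin.snoc_castSucc]
      rcases eq_or_ne c b with rfl | hcb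
      · rw [Equiv.swap_apply_right, Function.comp_apply, Equiv.swap_apply_right, Fin.snoc_castSucc]
      · rw [Function.comp_apply, Equiv.swap_apply_of_ne_of_ne hca hcb,
          Equiv.swap_apply_of_ne_of_ne (fun h => hca (Fin.castSucc_injective _ h))
            (fun h => hcb (Fin.castSucc_injective _ h)), Fin.snoc_castSucc]
  rw [h2, hsign]
  rw [Equiv.Perm.sign_swap (fun h => hab (Fin.castSucc_injective _ h)),
    Equiv.Perm.sign_mul, Equiv.Perm.sign_swap hab]
  push_cast
  ring

lemma det_contract {n m : ℕ} {Λ : (Fin (m+1) → Fin n) → ℝ}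
    (hsign : ∀ (v : Fin (m+1) → Fin n) (σ : Equiv.Perm (Fin (m+1))),
      Λ (v ∘ σ) = ((Equiv.Perm.sign σ : ℤ) : ℝ) * Λ v)
    (M : Fin m → Fin n → ℝ) (k : Fin n) :
    ∑ w : Fin m → Fin n, (Matrix.of fun a b => M a (w b)).det * Λ (Fin.snoc w k)
      = (Nat.factorial m : ℝ) * ∑ w : Fin m → Fin n, (∏ a, M a (w a)) * Λ (Fin.snoc w k) := by
  have hdet : ∀ w : Fin m → Fin n, (Matrix.of fun a b => M a (w b)).det
      = ∑ σ : Equiv.Perm (Fin m), ((Equiv.Perm.sign σ : ℤ) : ℝ) * ∏ i, M (σ i) (w i) := by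
    intro w
    rw [Matrix.det_apply]
    exact Finset.sum_congr rfl fun σ _ => by simp [Units.smul_def, zsmul_eq_mul]
  simp only [hdet, Finset.sum_mul]
  rw [Finset.sum_comm]
  have hσ : ∀ σ : Equiv.Perm (Fin m),
      ∑ w : Fin m → Fin n, (((Equiv.Perm.sign σ : ℤ) : ℝ) * ∏ i, M (σ i) (w i)) * Λ (Fin.snoc w k)
        = ∑ w : Fin m → Fin n, (∏ a, M a (w a)) * Λ (Fin.snoc w k) := by
    intro σ
    rw [← Equiv.sum_comp (Equiv.arrowCongr σ.symm (Equiv.refl (Fin n)))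
      (fun w => (((Equiv.Perm.sign σ : ℤ) : ℝ) * ∏ i, M (σ i) (w i)) * Λ (Fin.snoc w k))]
    refine Finset.sum_congr rfl fun w _ => ?_
    have h1 : (Equiv.arrowCongr σ.symm (Equiv.refl (Fin n))) w = w ∘ ⇑σ := by
      funext i; simp [Equiv.arrowCongr]
    rw [h1]
    have h2 : ∏ i, M (σ i) ((w ∘ ⇑σ) i) = ∏ a, M a (w a) :=
      Equiv.prod_comp σ (fun i => M i (w i))
    have h3 : Λ (Fin.snoc (w ∘ ⇑σ) k) = ((Equiv.Perm.sign σ : ℤ) : ℝ) * Λ (Fin.snoc w k) :=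
      lam_snoc_perm hsign σ w k
    rw [h2, h3]
    have hs : ((Equiv.Perm.sign σ : ℤ) : ℝ) * ((Equiv.Perm.sign σ : ℤ) : ℝ) = 1 := by
      rcases Int.units_eq_one_or (Equiv.Perm.sign σ) with h | h <;> rw [h] <;> norm_num
    calc ((Equiv.Perm.sign σ : ℤ) : ℝ) * (∏ a, M a (w a))
          * (((Equiv.Perm.sign σ : ℤ) : ℝ) * Λ (Fin.snoc w k))
        = (((Equiv.Perm.sign σ : ℤ) : ℝ) * ((Equiv.Perm.sign σ : ℤ) : ℝ))
          * ((∏ a, M a (w a)) * Λ (Fin.snoc w k)) := by ring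
      _ = (∏ a, M a (w a)) * Λ (Fin.snoc w k) := by rw [hs, one_mul]
  simp only [hσ]
  rw [Finset.sum_const, Finset.card_univ, Fintype.card_perm, Fintype.card_fin, nsmul_eq_mul]

lemma sum_comp_equiv_zero {α : Type*} [Fintype α] {t : α → ℝ} (e : α ≃ α)
    (h : ∀ v, t (e v) = - t v) : ∑ v, t v = 0 := by
  have h1 : ∑ v, t v = ∑ v, t (e v) := (Equiv.sum_comp e t).symm
  have h2 : ∑ v, t (e v) = - ∑ v, t v := by
    rw [← Finset.sum_neg_distrib]
    exact Finset.sum_congr rfl fun v _ => h v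
  linarith [h1, h2]

lemma alt_contract_zero {n m : ℕ} {Λ : (Fin (m+1) → Fin n) → ℝ}
    (hsign : ∀ (v : Fin (m+1) → Fin n) (σ : Equiv.Perm (Fin (m+1))),
      Λ (v ∘ σ) = ((Equiv.Perm.sign σ : ℤ) : ℝ) * Λ v)
    (F : Fin m → Fin n → ℝ) (S : Fin m → Fin n → Fin n → ℝ)
    (hS : ∀ a k l, S a k l = S a l k) :
    ∑ v : Fin (m+1) → Fin n,
      (∑ i : Fin (m+1), (-1:ℝ)^(i:ℕ) *
        ∑ a, ((Matrix.of fun a' b => F a' (v (i.succAbove b))).updateRow a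
               (fun b => S a (v (i.succAbove b)) (v i))).det) * Λ v = 0 := by
  have hdet : ∀ (v : Fin (m+1) → Fin n) (i : Fin (m+1)) (a : Fin m),
      ((Matrix.of fun a' b => F a' (v (i.succAbove b))).updateRow a
        (fun b => S a (v (i.succAbove b)) (v i))).det
      = ∑ σ : Equiv.Perm (Fin m), ((Equiv.Perm.sign σ : ℤ) : ℝ) *
          ∏ c, (if σ c = a then S a (v (i.succAbove c)) (v i) else F (σ c) (v (i.succAbove c))) := by
    intro v i a
    rw [Matrix.det_apply]
    refine Finset.sum_congr rfl fun σ _ => ?_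
    rw [Units.smul_def, zsmul_eq_mul]
    congr 1
    refine Finset.prod_congr rfl fun c _ => ?_
    rw [Matrix.updateRow_apply]
    by_cases hc : σ c = a <;> simp [hc]
  simp only [hdet, Finset.sum_mul, Finset.mul_sum]
  rw [Finset.sum_comm]
  refine Finset.sum_eq_zero fun i _ => ?_
  rw [Finset.sum_comm]
  refine Finset.sum_eq_zero fun a _ => ?_
  rw [Finset.sum_comm]
  refine Finset.sum_eq_zero fun σ _ => ?_
  set P : Fin (m+1) := i.succAbove (σ.symm a) with hP
  have hPi : P ≠ i := Fin.succAbove_ne i (σ.symm a)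
  set τ : Equiv.Perm (Fin (m+1)) := Equiv.swap i P with hτ
  refine sum_comp_equiv_zero (Equiv.arrowCongr τ.symm (Equiv.refl (Fin n))) fun v => ?_
  have harr : (Equiv.arrowCongr τ.symm (Equiv.refl (Fin n))) v = v ∘ ⇑τ := by
    funext c; simp [Equiv.arrowCongr]
  rw [harr]
  have hΛ : Λ (v ∘ ⇑τ) = - Λ v := by
    rw [hsign v τ, hτ, Equiv.Perm.sign_swap (Ne.symm hPi)]
    push_cast; ring
  have hprod : ∏ c, (if σ c = a then S a ((v ∘ ⇑τ) (i.succAbove c)) ((v ∘ ⇑τ) i)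
        else F (σ c) ((v ∘ ⇑τ) (i.succAbove c)))
      = ∏ c, (if σ c = a then S a (v (i.succAbove c)) (v i) else F (σ c) (v (i.succAbove c))) := by
    refine Finset.prod_congr rfl fun c _ => ?_
    by_cases hc : σ c = a
    · have hca : c = σ.symm a := by rw [← hc, Equiv.symm_apply_apply]
      subst hca
      rw [if_pos hc, if_pos hc]
      have e1 : (v ∘ ⇑τ) (i.succAbove (σ.symm a)) = v i := by
        simp only [Function.comp_apply, ← hP, hτ, Equiv.swap_apply_right]
      have e2 : (v ∘ ⇑τ) i = v P := by
        simp only [Function.comp_apply, hτ, Equiv.swap_apply_left]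
      rw [e1, e2, hP, hS]
    · rw [if_neg hc, if_neg hc]
      have hne1 : i.succAbove c ≠ i := Fin.succAbove_ne i c
      have hne2 : i.succAbove c ≠ P := by
        rw [hP]
        intro h
        apply hc
        rw [Fin.succAbove_right_injective.eq_iff] at h
        rw [h, Equiv.apply_symm_apply]
      rw [Function.comp_apply, hτ, Equiv.swap_apply_of_ne_of_ne hne1 hne2]
  rw [hprod, hΛ]
  ring

lemma contDiff_D {n : ℕ} {φ : (Fin n → ℝ) → ℝ} (hφ : ContDiff ℝ (⊤ : ℕ∞) φ) (u : Fin n → ℝ) :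
    ContDiff ℝ 1 (fun y => fderiv ℝ φ y u) :=
  ((hφ.fderiv_right (m := 1) (by exact WithTop.coe_le_coe.mpr le_top)).clm_apply contDiff_const)

lemma fderiv_fderiv_apply_const {n : ℕ} {φ : (Fin n → ℝ) → ℝ} (hφ : ContDiff ℝ (⊤ : ℕ∞) φ)
    (x v u : Fin n → ℝ) :
    fderiv ℝ (fun y => fderiv ℝ φ y v) x u = fderiv ℝ (fderiv ℝ φ) x u v := by
  have hd : DifferentiableAt ℝ (fderiv ℝ φ) x :=
    ((hφ.fderiv_right (m := 1) (by exact WithTop.coe_le_coe.mpr le_top)).differentiable one_ne_zero).differentiableAt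
  rw [fderiv_clm_apply hd (differentiableAt_const v)]
  simp

lemma snd_deriv_symm {n : ℕ} {φ : (Fin n → ℝ) → ℝ} (hφ : ContDiff ℝ (⊤ : ℕ∞) φ)
    (x u v : Fin n → ℝ) :
    fderiv ℝ (fderiv ℝ φ) x u v = fderiv ℝ (fderiv ℝ φ) x v u :=
  (hφ.contDiffAt.isSymmSndFDerivAt (by simp [minSmoothness_of_isRCLikeNormedField]; exact WithTop.coe_le_coe.mpr le_top)).eq u v

end AuxNambu


/-! An r-vector field Λ on ℝⁿ (r = m+1) is given by its alternating component
functions `Λc x v = Λ_x(dx_{v 0},…,dx_{v m})`; (r−1)-forms are given by their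
alternating components `α x w = α_x(e_{w 0},…,e_{w (m−1)})`. -/

/-- `Λ^♯(α)`, the contraction of the r-vector Λ with the (r−1)-form α. -/
noncomputable def sharpC (n m : ℕ)
    (Λc : (Fin n → ℝ) → (Fin (m+1) → Fin n) → ℝ)
    (α : (Fin n → ℝ) → (Fin m → Fin n) → ℝ) (x : Fin n → ℝ) : Fin n → ℝ :=
  fun k => (Nat.factorial m : ℝ)⁻¹ *
    ∑ w : Fin m → Fin n, α x w * Λc x (Fin.snoc w k)

/-- Lie derivative `L_X β` of an (r−1)-form β along a vector field X. -/
noncomputable def lieDC (n m : ℕ) (X : (Fin n → ℝ) → (Fin n → ℝ))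
    (β : (Fin n → ℝ) → (Fin m → Fin n) → ℝ)
    (x : Fin n → ℝ) (w : Fin m → Fin n) : ℝ :=
  fderiv ℝ (fun y => β y w) x (X x) +
    ∑ i : Fin m, ∑ k : Fin n,
      fderiv ℝ X x (Pi.single (w i) 1) k * β x (Function.update w i k)

/-- Exterior derivative `dα` of an (r−1)-form α. -/
noncomputable def extDC (n m : ℕ) (α : (Fin n → ℝ) → (Fin m → Fin n) → ℝ)
    (x : Fin n → ℝ) (v : Fin (m+1) → Fin n) : ℝ :=
  ∑ i : Fin (m+1), (-1 : ℝ)^(i : ℕ) *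
    fderiv ℝ (fun y => α y (fun k => v (i.succAbove k))) x (Pi.single (v i) 1)

/-- Full contraction `i_ω Λ` of an r-form ω with the r-vector Λ. -/
noncomputable def pairC (n m : ℕ)
    (Λc : (Fin n → ℝ) → (Fin (m+1) → Fin n) → ℝ)
    (ω : (Fin n → ℝ) → (Fin (m+1) → Fin n) → ℝ) (x : Fin n → ℝ) : ℝ :=
  (Nat.factorial (m+1) : ℝ)⁻¹ * ∑ v : Fin (m+1) → Fin n, ω x v * Λc x v

/-- The bracket `[α, β]_P = L_{Λ^♯(α)} β + (−1)^r (i_{dα} Λ) β` on (r−1)-forms. -/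
noncomputable def brP (n m : ℕ)
    (Λc : (Fin n → ℝ) → (Fin (m+1) → Fin n) → ℝ)
    (α β : (Fin n → ℝ) → (Fin m → Fin n) → ℝ)
    (x : Fin n → ℝ) (w : Fin m → Fin n) : ℝ :=
  lieDC n m (fun y => sharpC n m Λc α y) β x w +
    (-1 : ℝ)^(m+1) * pairC n m Λc (extDC n m α) x * β x w

/-- The Nambu bracket `{h₁,…,h_r} = Λ(dh₁,…,dh_r)`. -/
noncomputable def fullBrC (n m : ℕ)
    (Λc : (Fin n → ℝ) → (Fin (m+1) → Fin n) → ℝ)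
    (h : Fin (m+1) → ((Fin n → ℝ) → ℝ)) (x : Fin n → ℝ) : ℝ :=
  ∑ v : Fin (m+1) → Fin n,
    Λc x v * ∏ i, fderiv ℝ (h i) x (Pi.single (v i) 1)

/-- Components of the (r−1)-form `dh₁ ∧ ⋯ ∧ dh_{r−1}`. -/
noncomputable def wedgeDC (n m : ℕ) (h : Fin m → ((Fin n → ℝ) → ℝ))
    (x : Fin n → ℝ) (w : Fin m → Fin n) : ℝ :=
  Matrix.det (Matrix.of fun a b => fderiv ℝ (h a) x (Pi.single (w b) 1))

/- Theorem 3.33(1)(a):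
[df₁ ∧ ⋯ ∧ df_{r−1}, dg₁ ∧ ⋯ ∧ dg_{r−1}]_P
  = Σᵢ dg₁ ∧ ⋯ ∧ d{f₁,…,f_{r−1},g_i} ∧ ⋯ ∧ dg_{r−1}. -/
theorem stmt_18 (n m : ℕ)
    (Λc : (Fin n → ℝ) → (Fin (m+1) → Fin n) → ℝ)
    (hΛsm : ∀ v, ContDiff ℝ (⊤ : ℕ∞) (fun x => Λc x v))
    (hΛsign : ∀ x (v : Fin (m+1) → Fin n) (σ : Equiv.Perm (Fin (m+1))),
      Λc x (v ∘ σ) = ((Equiv.Perm.sign σ : ℤ) : ℝ) * Λc x v)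
    (hΛalt : ∀ x (v : Fin (m+1) → Fin n) (i j : Fin (m+1)),
      i ≠ j → v i = v j → Λc x v = 0)
    (f g : Fin m → ((Fin n → ℝ) → ℝ))
    (hf : ∀ i, ContDiff ℝ (⊤ : ℕ∞) (f i)) (hg : ∀ i, ContDiff ℝ (⊤ : ℕ∞) (g i)) :
    ∀ (x : Fin n → ℝ) (w : Fin m → Fin n),
      brP n m Λc (wedgeDC n m f) (wedgeDC n m g) x w =
        ∑ i : Fin m,
          wedgeDC n m
            (Function.update g i (fullBrC n m Λc (Fin.snoc f (g i)))) x w := by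
  intro x w
  classical
  set A : Matrix (Fin m) (Fin m) ℝ :=
    Matrix.of fun a b => fderiv ℝ (g a) x (Pi.single (w b) 1) with hA
  -- sharp in explicit form
  have sharp_eq : ∀ (y : Fin n → ℝ) (k : Fin n),
      sharpC n m Λc (wedgeDC n m f) y k
        = ∑ u : Fin m → Fin n,
            (∏ a, fderiv ℝ (f a) y (Pi.single (u a) 1)) * Λc y (Fin.snoc u k) := by
    intro y k
    have hc : ∑ u : Fin m → Fin n,
        (Matrix.of fun a b => fderiv ℝ (f a) y (Pi.single (u b) 1)).det * Λc y (Fin.snoc u k)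
        = (Nat.factorial m : ℝ) * ∑ u : Fin m → Fin n,
            (∏ a, fderiv ℝ (f a) y (Pi.single (u a) 1)) * Λc y (Fin.snoc u k) :=
      det_contract (hΛsign y) (fun a k' => fderiv ℝ (f a) y (Pi.single k' 1)) k
    simp only [sharpC, wedgeDC]
    rw [hc, ← mul_assoc, inv_mul_cancel₀ (by exact_mod_cast Nat.factorial_ne_zero m), one_mul]
  -- smoothness of the sharp vector field
  have hXk : ∀ k, ContDiff ℝ 1 (fun y => sharpC n m Λc (wedgeDC n m f) y k) := by
    intro k
    have h : (fun y => sharpC n m Λc (wedgeDC n m f) y k)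
        = fun y => ∑ u : Fin m → Fin n,
            (∏ a, fderiv ℝ (f a) y (Pi.single (u a) 1)) * Λc y (Fin.snoc u k) :=
      funext fun y => sharp_eq y k
    rw [h]
    refine ContDiff.sum fun u _ => ContDiff.mul ?_ ((hΛsm (Fin.snoc u k)).of_le (by simp))
    exact contDiff_prod fun a _ => contDiff_D (hf a) _
  have hXc : ContDiff ℝ 1 (fun y => sharpC n m Λc (wedgeDC n m f) y) :=
    contDiff_pi.mpr hXk
  have hXd : HasFDerivAt (fun y => sharpC n m Λc (wedgeDC n m f) y)
      (fderiv ℝ (fun y => sharpC n m Λc (wedgeDC n m f) y) x) x :=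
    ((hXc.differentiable one_ne_zero) x).hasFDerivAt
  -- the Nambu bracket is the derivative along the sharp field
  have fullBr_eq : ∀ (i : Fin m) (y : Fin n → ℝ),
      fullBrC n m Λc (Fin.snoc f (g i)) y
        = fderiv ℝ (g i) y (sharpC n m Λc (wedgeDC n m f) y) := by
    intro i y
    rw [clm_apply_eq_sum (fderiv ℝ (g i) y) (sharpC n m Λc (wedgeDC n m f) y)]
    simp only [fullBrC]
    have hsum : (∑ v : Fin (m+1) → Fin n,
        Λc y v * ∏ j : Fin (m+1),
          fderiv ℝ ((Fin.snoc f (g i) : Fin (m+1) → (Fin n → ℝ) → ℝ) j) y (Pi.single (v j) 1))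
        = ∑ p : Fin n × (Fin m → Fin n),
            Λc y (Fin.snoc p.2 p.1) * ∏ j : Fin (m+1),
              fderiv ℝ ((Fin.snoc f (g i) : Fin (m+1) → (Fin n → ℝ) → ℝ) j) y
              (Pi.single ((Fin.snoc p.2 p.1 : Fin (m+1) → Fin n) j) 1) := by
      rw [← Equiv.sum_comp (Fin.snocEquiv (fun _ => Fin n))
        (fun v : Fin (m+1) → Fin n => Λc y v * ∏ j : Fin (m+1),
          fderiv ℝ ((Fin.snoc f (g i) : Fin (m+1) → (Fin n → ℝ) → ℝ) j) y (Pi.single (v j) 1))]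
      refine Finset.sum_congr rfl fun p _ => ?_
      have hp : (Fin.snocEquiv (fun _ => Fin n)) p = Fin.snoc p.2 p.1 := by
        funext j; simp [Fin.snocEquiv]
      rw [hp]
    rw [hsum, Fintype.sum_prod_type]
    refine Finset.sum_congr rfl fun k _ => ?_
    rw [sharp_eq y k, Finset.sum_mul]
    refine Finset.sum_congr rfl fun u _ => ?_
    rw [Fin.prod_univ_castSucc]
    simp only [Fin.snoc_castSucc, Fin.snoc_last]
    ring
  -- symmetry of second derivatives of the f's
  have hS : ∀ (a : Fin m) (k l : Fin n),
      fderiv ℝ (fun y => fderiv ℝ (f a) y (Pi.single k 1)) x (Pi.single l 1)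
        = fderiv ℝ (fun y => fderiv ℝ (f a) y (Pi.single l 1)) x (Pi.single k 1) := by
    intro a k l
    rw [fderiv_fderiv_apply_const (hf a), fderiv_fderiv_apply_const (hf a),
      snd_deriv_symm (hf a)]
  -- the pair term vanishes
  have hpair : pairC n m Λc (extDC n m (wedgeDC n m f)) x = 0 := by
    have hext : ∀ v : Fin (m+1) → Fin n,
        extDC n m (wedgeDC n m f) x v
          = ∑ i : Fin (m+1), (-1:ℝ)^(i:ℕ) *
              ∑ a, ((Matrix.of fun a' b =>
                  fderiv ℝ (f a') x (Pi.single (v (i.succAbove b)) 1)).updateRow a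
                (fun b => fderiv ℝ (fun y =>
                  fderiv ℝ (f a) y (Pi.single (v (i.succAbove b)) 1)) x
                    (Pi.single (v i) 1))).det := by
      intro v
      simp only [extDC, wedgeDC]
      refine Finset.sum_congr rfl fun i _ => ?_
      congr 1
      exact fderiv_det_apply (fun a b =>
        (((contDiff_D (hf a) (Pi.single (v (i.succAbove b)) 1)).differentiable one_ne_zero) x).hasFDerivAt)
        (Pi.single (v i) 1)
    have h0 : ∑ v : Fin (m+1) → Fin n, extDC n m (wedgeDC n m f) x v * Λc x v = 0 := by
      have halt := alt_contract_zero (hΛsign x)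
        (fun a k => fderiv ℝ (f a) x (Pi.single k 1))
        (fun a k l => fderiv ℝ (fun y => fderiv ℝ (f a) y (Pi.single k 1)) x (Pi.single l 1))
        hS
      rw [← halt]
      exact Finset.sum_congr rfl fun v _ => by rw [hext v]
    simp only [pairC]
    rw [h0, mul_zero]
  -- first Lie-derivative term
  have hgHF : ∀ (a : Fin m) (kk : Fin n),
      HasFDerivAt (fun y => fderiv ℝ (g a) y (Pi.single kk 1))
        (fderiv ℝ (fun y => fderiv ℝ (g a) y (Pi.single kk 1)) x) x :=
    fun a kk => (((contDiff_D (hg a) (Pi.single kk 1)).differentiable one_ne_zero) x).hasFDerivAt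
  have hT1 : fderiv ℝ (fun y => wedgeDC n m g y w) x (sharpC n m Λc (wedgeDC n m f) x)
      = ∑ a, (A.updateRow a (fun b =>
          fderiv ℝ (fderiv ℝ (g a)) x (Pi.single (w b) 1)
            (sharpC n m Λc (wedgeDC n m f) x))).det := by
    have h := fderiv_det_apply (e := fun a b y => fderiv ℝ (g a) y (Pi.single (w b) 1))
      (e' := fun a b => fderiv ℝ (fun y => fderiv ℝ (g a) y (Pi.single (w b) 1)) x)
      (fun a b => hgHF a (w b)) (sharpC n m Λc (wedgeDC n m f) x)
    have hwg : (fun y => wedgeDC n m g y w) = (fun y =>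
        (Matrix.of fun a b => fderiv ℝ (g a) y (Pi.single (w b) 1)).det) := by
      funext y; simp only [wedgeDC]
    rw [hwg, h]
    refine Finset.sum_congr rfl fun a _ => ?_
    have hrow : (fun b => fderiv ℝ (fun y => fderiv ℝ (g a) y (Pi.single (w b) 1)) x
          (sharpC n m Λc (wedgeDC n m f) x))
        = fun b => fderiv ℝ (fderiv ℝ (g a)) x (Pi.single (w b) 1)
            (sharpC n m Λc (wedgeDC n m f) x) := by
      funext b
      rw [fderiv_fderiv_apply_const (hg a), snd_deriv_symm (hg a)]
    rw [← hA, hrow]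
  -- second Lie-derivative term
  have hT2 : ∑ i : Fin m, ∑ k : Fin n,
      fderiv ℝ (fun y => sharpC n m Λc (wedgeDC n m f) y) x (Pi.single (w i) 1) k *
        wedgeDC n m g x (Function.update w i k)
      = ∑ i, ∑ a, fderiv ℝ (g a) x
          (fderiv ℝ (fun y => sharpC n m Λc (wedgeDC n m f) y) x (Pi.single (w i) 1))
          * A.adjugate i a := by
    refine Finset.sum_congr rfl fun i _ => ?_
    have hcol : ∀ k, wedgeDC n m g x (Function.update w i k)
        = ∑ a, fderiv ℝ (g a) x (Pi.single k 1) * A.adjugate i a := by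
      intro k
      have hMat : (Matrix.of fun a b =>
            fderiv ℝ (g a) x (Pi.single (Function.update w i k b) 1))
          = A.updateCol i (fun a => fderiv ℝ (g a) x (Pi.single k 1)) := by
        ext a b
        by_cases hbi : b = i
        · subst hbi; simp
        · simp [Matrix.updateCol_apply, hbi, Function.update_of_ne hbi, hA]
      simp only [wedgeDC]
      rw [hMat, det_updateColumn_expand]
    simp only [hcol]
    calc ∑ k : Fin n, fderiv ℝ (fun y => sharpC n m Λc (wedgeDC n m f) y) x (Pi.single (w i) 1) k *
          ∑ a, fderiv ℝ (g a) x (Pi.single k 1) * A.adjugate i a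
        = ∑ k : Fin n, ∑ a, fderiv ℝ (fun y => sharpC n m Λc (wedgeDC n m f) y) x (Pi.single (w i) 1) k *
            (fderiv ℝ (g a) x (Pi.single k 1) * A.adjugate i a) := by
          exact Finset.sum_congr rfl fun k _ => Finset.mul_sum _ _ _
      _ = ∑ a, ∑ k : Fin n, fderiv ℝ (fun y => sharpC n m Λc (wedgeDC n m f) y) x (Pi.single (w i) 1) k *
            (fderiv ℝ (g a) x (Pi.single k 1) * A.adjugate i a) := Finset.sum_comm
      _ = ∑ a, (∑ k : Fin n, fderiv ℝ (fun y => sharpC n m Λc (wedgeDC n m f) y) x (Pi.single (w i) 1) k *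
            fderiv ℝ (g a) x (Pi.single k 1)) * A.adjugate i a := by
          refine Finset.sum_congr rfl fun a _ => ?_
          rw [Finset.sum_mul]
          exact Finset.sum_congr rfl fun k _ => by ring
      _ = ∑ a, fderiv ℝ (g a) x
            (fderiv ℝ (fun y => sharpC n m Λc (wedgeDC n m f) y) x (Pi.single (w i) 1))
            * A.adjugate i a := by
          refine Finset.sum_congr rfl fun a _ => ?_
          rw [← clm_apply_eq_sum]
  -- the right-hand side, row by row
  have hRHS : ∀ i : Fin m,
      wedgeDC n m (Function.update g i (fullBrC n m Λc (Fin.snoc f (g i)))) x w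
        = (A.updateRow i (fun b => fderiv ℝ (g i) x
              (fderiv ℝ (fun y => sharpC n m Λc (wedgeDC n m f) y) x (Pi.single (w b) 1)))).det
          + (A.updateRow i (fun b =>
              fderiv ℝ (fderiv ℝ (g i)) x (Pi.single (w b) 1)
                (sharpC n m Λc (wedgeDC n m f) x))).det := by
    intro i
    have hBr : fullBrC n m Λc (Fin.snoc f (g i))
        = fun y => (fderiv ℝ (g i) y) (sharpC n m Λc (wedgeDC n m f) y) :=
      funext fun y => fullBr_eq i y
    have hMat : (Matrix.of fun a b => fderiv ℝ ((Function.update g i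
          (fullBrC n m Λc (Fin.snoc f (g i)))) a) x (Pi.single (w b) 1))
        = A.updateRow i (fun b =>
            fderiv ℝ (fullBrC n m Λc (Fin.snoc f (g i))) x (Pi.single (w b) 1)) := by
      ext a b
      by_cases hai : a = i
      · subst hai; simp
      · simp [Matrix.updateRow_apply, hai, Function.update_of_ne hai, hA]
    have hci : HasFDerivAt (fun y => fderiv ℝ (g i) y) (fderiv ℝ (fderiv ℝ (g i)) x) x :=
      (((((hg i).fderiv_right (m := 1) (by exact WithTop.coe_le_coe.mpr le_top))).differentiable one_ne_zero) x).hasFDerivAt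
    have hD : fderiv ℝ (fullBrC n m Λc (Fin.snoc f (g i))) x
        = (fderiv ℝ (g i) x).comp (fderiv ℝ (fun y => sharpC n m Λc (wedgeDC n m f) y) x)
          + (fderiv ℝ (fderiv ℝ (g i)) x).flip (sharpC n m Λc (wedgeDC n m f) x) := by
      rw [hBr]
      exact (hci.clm_apply hXd).fderiv
    simp only [wedgeDC]
    rw [hMat, hD]
    have hsplit : (fun b => ((fderiv ℝ (g i) x).comp
            (fderiv ℝ (fun y => sharpC n m Λc (wedgeDC n m f) y) x)
          + (fderiv ℝ (fderiv ℝ (g i)) x).flip (sharpC n m Λc (wedgeDC n m f) x))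
            (Pi.single (w b) 1))
        = (fun b => fderiv ℝ (g i) x
            (fderiv ℝ (fun y => sharpC n m Λc (wedgeDC n m f) y) x (Pi.single (w b) 1)))
          + (fun b => fderiv ℝ (fderiv ℝ (g i)) x (Pi.single (w b) 1)
              (sharpC n m Λc (wedgeDC n m f) x)) := by
      funext b
      simp [ContinuousLinearMap.add_apply, ContinuousLinearMap.comp_apply,
        ContinuousLinearMap.flip_apply]
    rw [hsplit, Matrix.det_updateRow_add]
  -- matching the second parts
  have key2 : ∑ i, ∑ a, fderiv ℝ (g a) x
        (fderiv ℝ (fun y => sharpC n m Λc (wedgeDC n m f) y) x (Pi.single (w i) 1))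
        * A.adjugate i a
      = ∑ i, (A.updateRow i (fun b => fderiv ℝ (g i) x
          (fderiv ℝ (fun y => sharpC n m Λc (wedgeDC n m f) y) x (Pi.single (w b) 1)))).det := by
    rw [Finset.sum_comm]
    refine Finset.sum_congr rfl fun i _ => ?_
    rw [det_updateRow_expand]
  -- assemble
  simp only [brP, lieDC]
  rw [hpair, mul_zero, zero_mul, add_zero, hT1, hT2, key2]
  simp only [hRHS]
  rw [Finset.sum_add_distrib]
  ring
end
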